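/- arXiv:1907.04930 — 8 statements merged into one kernel-verified Lean document; each statement's English description precedes it below -/
import Mathlib

section
/- Let r > k ≥ 2 and let F be an r-uniform hypergraph on [n] that is G_r(3r-2k,3)-free (every three distinct edges span at least 3r-2k+1 vertices) and has no (k-1)-subset of codegree exactly one. Then every k-subset of [n] has codegree at most 2 in F, and if a k-subset K is contained in two distinct edges A and B, then |A ∩ B| = k. -/
open Finset

/-- In a G_r(3r-2k,3)-free r-graph with no (k-1)-subset of codegree one, every
k-subset has codegree at most 2, and two distinct edges through a common k-subset
meet in exactly k vertices. -/
theorem codegree_le_two_and_inter_eq_k (n r k : ℕ) (hk : 2 ≤ k) (hrk : k < r)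
    (F : Finset (Finset (Fin n))) (huniform : ∀ A ∈ F, A.card = r)
    (hfree : ∀ A ∈ F, ∀ B ∈ F, ∀ C ∈ F, A ≠ B → A ≠ C → B ≠ C →
      3 * r - 2 * k + 1 ≤ (A ∪ B ∪ C).card)
    (hnoone : ∀ T : Finset (Fin n), T.card = k - 1 →
      (F.filter (fun A => T ⊆ A)).card ≠ 1) :
    (∀ K : Finset (Fin n), K.card = k → (F.filter (fun A => K ⊆ A)).card ≤ 2) ∧
    (∀ K : Finset (Fin n), K.card = k → ∀ A ∈ F, ∀ B ∈ F, A ≠ B →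
      K ⊆ A → K ⊆ B → (A ∩ B).card = k) := by
  constructor
  · intro K hK
    by_contra h
    push_neg at h
    obtain ⟨A, B, C, hA, hB, hC, hAB, hAC, hBC⟩ := Finset.two_lt_card_iff.mp h
    rw [Finset.mem_filter] at hA hB hC
    obtain ⟨hAF, hKA⟩ := hA
    obtain ⟨hBF, hKB⟩ := hB
    obtain ⟨hCF, hKC⟩ := hC
    have h1 := hfree A hAF B hBF C hCF hAB hAC hBC
    have e1 := Finset.card_union_add_card_inter (A ∪ B) C
    have e2 := Finset.card_union_add_card_inter A B
    have h2 : k ≤ (A ∩ B).card := hK ▸ Finset.card_le_card (Finset.subset_inter hKA hKB)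
    have h3 : k ≤ ((A ∪ B) ∩ C).card := hK ▸ Finset.card_le_card
      (Finset.subset_inter (hKA.trans Finset.subset_union_left) hKC)
    rw [huniform A hAF, huniform B hBF, huniform C hCF] at *
    omega
  · intro K hK A hAF B hBF hAB hKA hKB
    have hcA := huniform A hAF
    have hcB := huniform B hBF
    obtain ⟨x, hxA, hxB⟩ : ∃ x ∈ A, x ∉ B := by
      by_contra h
      push_neg at h
      exact hAB (Finset.eq_of_subset_of_card_le h (by omega))
    obtain ⟨S, hS, hScard⟩ := Finset.exists_subset_card_eq (s := A.erase x) (n := k - 2)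
      (by rw [Finset.card_erase_of_mem hxA]; omega)
    have hxS : x ∉ S := fun hmem => (Finset.mem_erase.mp (hS hmem)).1 rfl
    have hTcard : (insert x S).card = k - 1 := by
      rw [Finset.card_insert_of_notMem hxS]; omega
    have hTA : insert x S ⊆ A :=
      Finset.insert_subset hxA (hS.trans (Finset.erase_subset _ _))
    have hApos : A ∈ F.filter (fun E => insert x S ⊆ E) := Finset.mem_filter.mpr ⟨hAF, hTA⟩
    have h2 : 1 < (F.filter (fun E => insert x S ⊆ E)).card := by
      have := Finset.card_pos.mpr ⟨A, hApos⟩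
      have := hnoone _ hTcard
      omega
    obtain ⟨C, hCmem, hCA⟩ := Finset.exists_mem_ne h2 A
    rw [Finset.mem_filter] at hCmem
    obtain ⟨hCF, hTC⟩ := hCmem
    have hCB : C ≠ B := fun h => hxB (h ▸ hTC (Finset.mem_insert_self x S))
    have h1 := hfree A hAF B hBF C hCF hAB (Ne.symm hCA) (Ne.symm hCB)
    have e1 := Finset.card_union_add_card_inter (A ∪ B) C
    have e2 := Finset.card_union_add_card_inter A B
    have hm : k ≤ (A ∩ B).card := hK ▸ Finset.card_le_card (Finset.subset_inter hKA hKB)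
    have hp : k - 1 ≤ ((A ∪ B) ∩ C).card := hTcard ▸ Finset.card_le_card
      (Finset.subset_inter (hTA.trans Finset.subset_union_left) hTC)
    rw [hcA, hcB, huniform C hCF] at *
    omega
end

section
/- Let r > k ≥ 2 and let F be an r-uniform hypergraph on [n] that is G_r(3r-2k,3)-free and has no (k-1)-subset of codegree one. For each k-subset K of codegree 2, contained in edges A, B, define Φ_K = (all k-subsets of A ∪ all k-subsets of B) minus {K}. Then |Φ_K| = 2·C(r,k) - 2, every member of Φ_K has codegree exactly 1 in F, and Φ_K ∩ Φ_{K'} = ∅ for distinct k-subsets K, K' of codegree 2. -/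
open Finset

/-- Any two distinct edges of such a hypergraph intersect in at most `k` vertices. -/
lemma inter_card_le_aux (n r k : ℕ) (hk : 2 ≤ k) (hrk : k < r)
    (F : Finset (Finset (Fin n))) (huniform : ∀ A ∈ F, A.card = r)
    (hfree : ∀ A ∈ F, ∀ B ∈ F, ∀ C ∈ F, A ≠ B → A ≠ C → B ≠ C →
      3 * r - 2 * k + 1 ≤ (A ∪ B ∪ C).card)
    (hnoone : ∀ T : Finset (Fin n), T.card = k - 1 →
      (F.filter (fun A => T ⊆ A)).card ≠ 1)
    {A B : Finset (Fin n)} (hA : A ∈ F) (hB : B ∈ F) (hAB : A ≠ B) :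
    (A ∩ B).card ≤ k := by
  by_contra h
  push_neg at h
  have hAc := huniform A hA
  have hBc := huniform B hB
  have hxe : (A \ B).Nonempty := by
    rw [Finset.sdiff_nonempty]
    intro hsub
    exact hAB (Finset.eq_of_subset_of_card_le hsub (by omega))
  obtain ⟨x, hx⟩ := hxe
  rw [Finset.mem_sdiff] at hx
  obtain ⟨S, hSsub, hScard⟩ := Finset.exists_subset_card_eq
    (show k - 2 ≤ (A.erase x).card by rw [Finset.card_erase_of_mem hx.1]; omega)
  have hxS : x ∉ S := fun hxS => (Finset.mem_erase.mp (hSsub hxS)).1 rfl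
  set T := insert x S with hT
  have hTcard : T.card = k - 1 := by rw [Finset.card_insert_of_notMem hxS]; omega
  have hTA : T ⊆ A := Finset.insert_subset hx.1 (hSsub.trans (Finset.erase_subset _ _))
  have hTB : ¬ T ⊆ B := fun h' => hx.2 (h' (Finset.mem_insert_self _ _))
  have h1 : A ∈ F.filter (fun E => T ⊆ E) := Finset.mem_filter.mpr ⟨hA, hTA⟩
  have h2 : 1 < (F.filter (fun E => T ⊆ E)).card := by
    have hpos := Finset.card_pos.mpr ⟨A, h1⟩
    have hne := hnoone T hTcard
    omega
  obtain ⟨C, hCmem, hCA⟩ := Finset.exists_mem_ne h2 A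
  rw [Finset.mem_filter] at hCmem
  obtain ⟨hCF, hTC⟩ := hCmem
  have hCB : C ≠ B := fun h' => hTB (h' ▸ hTC)
  have hfr := hfree A hA B hB C hCF hAB (Ne.symm hCA) (Ne.symm hCB)
  have hsub : A ∪ B ∪ C ⊆ (A ∪ B) ∪ (C \ T) := by
    intro y hy
    rcases Finset.mem_union.mp hy with hy | hy
    · exact Finset.mem_union_left _ hy
    · by_cases hyT : y ∈ T
      · exact Finset.mem_union_left _ (Finset.mem_union_left _ (hTA hyT))
      · exact Finset.mem_union_right _ (Finset.mem_sdiff.mpr ⟨hy, hyT⟩)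
  have hle := (Finset.card_le_card hsub).trans (Finset.card_union_le _ _)
  have hsd : (C \ T).card = C.card - T.card := Finset.card_sdiff_of_subset hTC
  have hui : (A ∪ B).card + (A ∩ B).card = A.card + B.card :=
    Finset.card_union_add_card_inter A B
  have hCc := huniform C hCF
  omega

/-- A `k`-subset of `A` not contained in `B` has codegree exactly one:
its only containing edge is `A`. -/
lemma filter_eq_singleton_aux (n r k : ℕ) (hrk : k < r)
    (F : Finset (Finset (Fin n))) (huniform : ∀ A ∈ F, A.card = r)
    (hfree : ∀ A ∈ F, ∀ B ∈ F, ∀ C ∈ F, A ≠ B → A ≠ C → B ≠ C →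
      3 * r - 2 * k + 1 ≤ (A ∪ B ∪ C).card)
    {A B : Finset (Fin n)} (hA : A ∈ F) (hB : B ∈ F) (hAB : A ≠ B)
    (hint : k ≤ (A ∩ B).card)
    {L : Finset (Fin n)} (hL : L.card = k) (hLA : L ⊆ A) (hLB : ¬ L ⊆ B) :
    F.filter (fun E => L ⊆ E) = {A} := by
  apply Finset.eq_singleton_iff_unique_mem.mpr
  refine ⟨Finset.mem_filter.mpr ⟨hA, hLA⟩, ?_⟩
  intro C hC
  rw [Finset.mem_filter] at hC
  obtain ⟨hCF, hLC⟩ := hC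
  by_contra hCA
  have hCB : C ≠ B := fun h' => hLB (h' ▸ hLC)
  have hfr := hfree A hA B hB C hCF hAB (fun h' => hCA h'.symm) (Ne.symm hCB)
  have hsub : A ∪ B ∪ C ⊆ (A ∪ B) ∪ (C \ L) := by
    intro y hy
    rcases Finset.mem_union.mp hy with hy | hy
    · exact Finset.mem_union_left _ hy
    · by_cases hyL : y ∈ L
      · exact Finset.mem_union_left _ (Finset.mem_union_left _ (hLA hyL))
      · exact Finset.mem_union_right _ (Finset.mem_sdiff.mpr ⟨hy, hyL⟩)
  have hle := (Finset.card_le_card hsub).trans (Finset.card_union_le _ _)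
  have hsd : (C \ L).card = C.card - L.card := Finset.card_sdiff_of_subset hLC
  have hui : (A ∪ B).card + (A ∩ B).card = A.card + B.card :=
    Finset.card_union_add_card_inter A B
  have hAc := huniform A hA
  have hBc := huniform B hB
  have hCc := huniform C hCF
  have hint2 : (A ∩ B).card ≤ A.card :=
    Finset.card_le_card (Finset.inter_subset_left)
  omega

/-- Three distinct edges, two of which meet a fixed one in at least `k` vertices,
contradict `G_r(3r-2k,3)`-freeness. -/
lemma triple_contra_aux (n r k : ℕ)
    (F : Finset (Finset (Fin n))) (huniform : ∀ A ∈ F, A.card = r)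
    (hfree : ∀ A ∈ F, ∀ B ∈ F, ∀ C ∈ F, A ≠ B → A ≠ C → B ≠ C →
      3 * r - 2 * k + 1 ≤ (A ∪ B ∪ C).card)
    {D X X' : Finset (Fin n)} (hD : D ∈ F) (hX : X ∈ F) (hX' : X' ∈ F)
    (h1 : D ≠ X) (h2 : D ≠ X') (h3 : X ≠ X')
    (hk1 : k ≤ (D ∩ X).card) (hk2 : k ≤ (D ∩ X').card) : False := by
  have hfr := hfree D hD X hX X' hX' h1 h2 h3
  have hsub : D ∪ X ∪ X' ⊆ D ∪ (X \ D) ∪ (X' \ D) := by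
    intro y hy
    simp only [Finset.mem_union, Finset.mem_sdiff] at *
    tauto
  have hle := (Finset.card_le_card hsub).trans
    ((Finset.card_union_le _ _).trans (by
      exact Nat.add_le_add_right (Finset.card_union_le _ _) _))
  have e1 : (X ∩ D).card + (X \ D).card = X.card := Finset.card_inter_add_card_sdiff X D
  have e2 : (X' ∩ D).card + (X' \ D).card = X'.card := Finset.card_inter_add_card_sdiff X' D
  have c1 : (X ∩ D).card = (D ∩ X).card := by rw [Finset.inter_comm]
  have c2 : (X' ∩ D).card = (D ∩ X').card := by rw [Finset.inter_comm]
  have hDc := huniform D hD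
  have hXc := huniform X hX
  have hXc' := huniform X' hX'
  have hkr : (D ∩ X).card ≤ D.card := Finset.card_le_card (Finset.inter_subset_left)
  omega

/-- Properties of the families Φ_K of k-subsets associated to codegree-2 k-subsets K
in a G_r(3r-2k,3)-free r-graph with no (k-1)-subset of codegree one. -/
theorem phi_K_properties (n r k : ℕ) (hk : 2 ≤ k) (hrk : k < r)
    (F : Finset (Finset (Fin n))) (huniform : ∀ A ∈ F, A.card = r)
    (hfree : ∀ A ∈ F, ∀ B ∈ F, ∀ C ∈ F, A ≠ B → A ≠ C → B ≠ C →
      3 * r - 2 * k + 1 ≤ (A ∪ B ∪ C).card)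
    (hnoone : ∀ T : Finset (Fin n), T.card = k - 1 →
      (F.filter (fun A => T ⊆ A)).card ≠ 1) :
    (∀ K A B, K.card = k → A ∈ F → B ∈ F → A ≠ B → K ⊆ A → K ⊆ B →
      (F.filter (fun E => K ⊆ E)).card = 2 →
      ((A.powersetCard k ∪ B.powersetCard k).erase K).card = 2 * r.choose k - 2 ∧
      (∀ L ∈ (A.powersetCard k ∪ B.powersetCard k).erase K,
        (F.filter (fun E => L ⊆ E)).card = 1)) ∧
    (∀ K A B K' A' B', K.card = k → A ∈ F → B ∈ F → A ≠ B → K ⊆ A → K ⊆ B →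
      (F.filter (fun E => K ⊆ E)).card = 2 →
      K'.card = k → A' ∈ F → B' ∈ F → A' ≠ B' → K' ⊆ A' → K' ⊆ B' →
      (F.filter (fun E => K' ⊆ E)).card = 2 → K ≠ K' →
      Disjoint ((A.powersetCard k ∪ B.powersetCard k).erase K)
        ((A'.powersetCard k ∪ B'.powersetCard k).erase K')) := by
  -- If K is a k-set contained in two distinct edges A, B, then A ∩ B = K.
  have hinter : ∀ {A B K : Finset (Fin n)}, A ∈ F → B ∈ F → A ≠ B → K.card = k →
      K ⊆ A → K ⊆ B → A ∩ B = K := by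
    intro A B K hA hB hAB hK hKA hKB
    have h1 : (A ∩ B).card ≤ k :=
      inter_card_le_aux n r k hk hrk F huniform hfree hnoone hA hB hAB
    exact (Finset.eq_of_subset_of_card_le (Finset.subset_inter hKA hKB)
      (by omega)).symm
  -- For L in Φ_K, the filter is {A} or {B}.
  have getD : ∀ (A B K L : Finset (Fin n)), A ∈ F → B ∈ F → A ≠ B → K.card = k →
      A ∩ B = K → L ∈ (A.powersetCard k ∪ B.powersetCard k).erase K →
      F.filter (fun E => L ⊆ E) = {A} ∨ F.filter (fun E => L ⊆ E) = {B} := by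
    intro A B K L hA hB hAB hK hABK hL
    rw [Finset.mem_erase, Finset.mem_union, Finset.mem_powersetCard,
      Finset.mem_powersetCard] at hL
    obtain ⟨hLK, hLmem⟩ := hL
    rcases hLmem with ⟨hLA, hLc⟩ | ⟨hLB, hLc⟩
    · left
      by_cases hLB : L ⊆ B
      · exact absurd (Finset.eq_of_subset_of_card_le
          (hABK ▸ Finset.subset_inter hLA hLB) (by omega)) hLK
      · exact filter_eq_singleton_aux n r k hrk F huniform hfree hA hB hAB
          (by rw [hABK]; omega) hLc hLA hLB
    · right
      by_cases hLA : L ⊆ A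
      · exact absurd (Finset.eq_of_subset_of_card_le
          (hABK ▸ Finset.subset_inter hLA hLB) (by omega)) hLK
      · exact filter_eq_singleton_aux n r k hrk F huniform hfree hB hA hAB.symm
          (by rw [Finset.inter_comm, hABK]; omega) hLc hLB hLA
  constructor
  · intro K A B hK hA hB hAB hKA hKB _hcod
    have hABK : A ∩ B = K := hinter hA hB hAB hK hKA hKB
    have hAc := huniform A hA
    have hBc := huniform B hB
    have hint : (A.powersetCard k ∩ B.powersetCard k) = {K} := by
      ext S
      simp only [Finset.mem_inter, Finset.mem_powersetCard, Finset.mem_singleton]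
      constructor
      · rintro ⟨⟨hSA, hSc⟩, hSB, -⟩
        exact Finset.eq_of_subset_of_card_le
          (hABK ▸ Finset.subset_inter hSA hSB) (by omega)
      · rintro rfl
        exact ⟨⟨hKA, hK⟩, hKB, hK⟩
    have hKmem : K ∈ A.powersetCard k ∪ B.powersetCard k :=
      Finset.mem_union_left _ (Finset.mem_powersetCard.mpr ⟨hKA, hK⟩)
    constructor
    · have h1 := Finset.card_union_add_card_inter (A.powersetCard k) (B.powersetCard k)
      rw [hint, Finset.card_singleton, Finset.card_powersetCard,
        Finset.card_powersetCard, hAc, hBc] at h1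
      have hpos := Nat.choose_pos (le_of_lt hrk)
      rw [Finset.card_erase_of_mem hKmem]
      omega
    · intro L hL
      rcases getD A B K L hA hB hAB hK hABK hL with h1 | h1 <;>
        rw [h1, Finset.card_singleton]
  · intro K A B K' A' B' hK hA hB hAB hKA hKB _hcod hK' hA' hB' hAB' hKA' hKB' _hcod' hne
    have hABK : A ∩ B = K := hinter hA hB hAB hK hKA hKB
    have hABK' : A' ∩ B' = K' := hinter hA' hB' hAB' hK' hKA' hKB'
    rw [Finset.disjoint_left]
    intro L hL hL'
    rcases getD A B K L hA hB hAB hK hABK hL with h1 | h1 <;>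
      rcases getD A' B' K' L hA' hB' hAB' hK' hABK' hL' with h2 | h2
    · -- A = A'
      have hDD : A = A' := Finset.singleton_injective (h1.symm.trans h2)
      by_cases hBB : B = B'
      · exact hne (by rw [← hABK, ← hABK', hDD, hBB])
      · exact triple_contra_aux n r k F huniform hfree hA hB hB' hAB
          (hDD ▸ hAB') hBB (by rw [hABK, hK]) (by rw [hDD, hABK', hK'])
    · -- A = B'
      have hDD : A = B' := Finset.singleton_injective (h1.symm.trans h2)
      by_cases hBB : B = A'
      · exact hne (by rw [← hABK, ← hABK', ← hDD, ← hBB, Finset.inter_comm])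
      · exact triple_contra_aux n r k F huniform hfree hA hB hA' hAB
          (hDD ▸ (Ne.symm hAB')) hBB (by rw [hABK, hK])
          (by rw [hDD, Finset.inter_comm, hABK', hK'])
    · -- B = A'
      have hDD : B = A' := Finset.singleton_injective (h1.symm.trans h2)
      by_cases hBB : A = B'
      · exact hne (by rw [← hABK, ← hABK', ← hDD, ← hBB, Finset.inter_comm])
      · exact triple_contra_aux n r k F huniform hfree hB hA hB' hAB.symm
          (hDD ▸ hAB') hBB (by rw [Finset.inter_comm, hABK, hK])
          (by rw [hDD, hABK', hK'])
    · -- B = B'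
      have hDD : B = B' := Finset.singleton_injective (h1.symm.trans h2)
      by_cases hBB : A = A'
      · exact hne (by rw [← hABK, ← hABK', hBB, hDD])
      · exact triple_contra_aux n r k F huniform hfree hB hA hA' hAB.symm
          (hDD ▸ (Ne.symm hAB')) hBB (by rw [Finset.inter_comm, hABK, hK])
          (by rw [hDD, Finset.inter_comm, hABK', hK'])
end

section
/- Let r > k ≥ 2 be fixed. If F is a G_r(3r-2k,3)-free r-uniform hypergraph on n vertices with no (k-1)-subset of codegree one, then C(r,k)·|F| ≤ (2C(r,k)/(2C(r,k)-1))·C(n,k). Consequently f_r(n, 3r-2k, 3) ≤ (2C(r,k)/(2C(r,k)-1))·C(n,k)/C(r,k) + C(n,k-1), where f_r(n,v,e) is the maximum number of edges in a G_r(v,e)-free r-uniform hypergraph on n vertices. -/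
/-!
Let `d(S)` be the number of edges through a `k`-set `S`. Two `k`-sets `S ⊆ A ∩ B` and
`T ⊆ A ∩ C` in edges `A, B, C` force `|A ∪ B ∪ C| ≤ 3r - 2k`; hence `d ≤ 2`, and, since a
`(k-1)`-set lies in no edge or in at least two, two edges share at most `k` vertices, so each edge
contains at most one `k`-set of degree two. Double counting `∑ d(S) = C(r,k)|F|` then gives
`2 C(r,k) |F| ≤ 2 C(n,k) + |F|`. For an arbitrary `G_r(3r-2k,3)`-free family, delete edges
through `(k-1)`-sets of codegree one: each deletion uncovers such a set for good, so at most
`C(n,k-1)` edges are deleted.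
-/

open Finset

/-- `sparseTuranNumber n r v e` is `f_r(n,v,e)`, the maximum number of edges in an
r-uniform hypergraph on n vertices in which the union of any e distinct edges
contains at least v+1 vertices. -/
noncomputable def sparseTuranNumber (n r v e : ℕ) : ℕ :=
  sSup {m | ∃ H : Finset (Finset (Fin n)),
    (∀ A ∈ H, A.card = r) ∧
    (∀ S ⊆ H, S.card = e → v + 1 ≤ (S.sup id).card) ∧
    H.card = m}

section Hypergraph

variable {α : Type*} [DecidableEq α]

def codegree (F : Finset (Finset α)) (T : Finset α) : ℕ := #(F.filter (fun A => T ⊆ A))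

-- For `r`-uniform `F` this says that `F` is `G_r(v,3)`-free.
def TriplesSpanMoreThan (v : ℕ) (F : Finset (Finset α)) : Prop :=
  ∀ A ∈ F, ∀ B ∈ F, ∀ C ∈ F, A ≠ B → A ≠ C → B ≠ C → v + 1 ≤ #(A ∪ B ∪ C)

theorem TriplesSpanMoreThan.mono {v : ℕ} {F G : Finset (Finset α)} (hFG : F ⊆ G)
    (hG : TriplesSpanMoreThan v G) : TriplesSpanMoreThan v F :=
  fun A hA B hB C hC => hG A (hFG hA) B (hFG hB) C (hFG hC)

lemma card_union_three_add_le {A B C S T : Finset α} (hS : S ⊆ A ∩ B) (hT : T ⊆ (A ∪ B) ∩ C) :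
    #(A ∪ B ∪ C) + #S + #T ≤ #A + #B + #C := by
  have hAB := card_union_add_card_inter A B
  have hABC := card_union_add_card_inter (A ∪ B) C
  have := card_le_card hS
  have := card_le_card hT
  omega

lemma exists_subset_card_eq_mem {A : Finset α} {x : α} {j : ℕ} (hx : x ∈ A) (hj : 1 ≤ j)
    (hjA : j ≤ #A) : ∃ T ⊆ A, x ∈ T ∧ #T = j := by
  obtain ⟨t, htA, htc⟩ := exists_subset_card_eq (s := A.erase x) (n := j - 1)
    (by rw [card_erase_of_mem hx]; omega)
  refine ⟨insert x t, insert_subset hx (htA.trans (erase_subset _ _)), mem_insert_self _ _, ?_⟩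
  rw [card_insert_of_notMem (fun h => (mem_erase.1 (htA h)).1 rfl), htc]
  omega

lemma sum_codegree_powersetCard [Fintype α] {F : Finset (Finset α)} {r : ℕ}
    (hF : (F : Set (Finset α)).Sized r) (k : ℕ) :
    ∑ S ∈ powersetCard k univ, codegree F S = r.choose k * #F := by
  calc ∑ S ∈ powersetCard k univ, codegree F S
      = ∑ A ∈ F, #((powersetCard k univ).bipartiteBelow (· ⊆ ·) A) :=
        sum_card_bipartiteAbove_eq_sum_card_bipartiteBelow _
    _ = ∑ A ∈ F, r.choose k := sum_congr rfl fun A hA => by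
        rw [← hF hA, ← card_powersetCard]
        congr 1
        ext S
        simp [bipartiteBelow, and_comm]
    _ = r.choose k * #F := by rw [sum_const, smul_eq_mul, mul_comm]

section Counting

variable {F : Finset (Finset α)} {r k : ℕ} (hF : (F : Set (Finset α)).Sized r)
  (hF3 : TriplesSpanMoreThan (3 * r - 2 * k) F)
include hF hF3

lemma codegree_le_two {S : Finset α} (hS : #S = k) : codegree F S ≤ 2 := by
  by_contra! h
  obtain ⟨t, ht, htc⟩ := exists_subset_card_eq (n := 3) h
  obtain ⟨A, B, C, hAB, hAC, hBC, rfl⟩ := card_eq_three.1 htc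
  simp only [insert_subset_iff, singleton_subset_iff, mem_filter] at ht
  obtain ⟨⟨hA, hSA⟩, ⟨hB, hSB⟩, ⟨hC, hSC⟩⟩ := ht
  have := card_union_three_add_le (subset_inter hSA hSB)
    (subset_inter (hSA.trans subset_union_left) hSC)
  have := hF3 A hA B hB C hC hAB hAC hBC
  rw [hF hA, hF hB, hF hC] at *
  omega

lemma card_inter_le_of_codegree_ne_one (hk : 2 ≤ k)
    (hcodeg : ∀ T : Finset α, #T = k - 1 → codegree F T ≠ 1)
    {A B : Finset α} (hA : A ∈ F) (hB : B ∈ F) (hAB : A ≠ B) : #(A ∩ B) ≤ k := by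
  by_contra! hlt
  obtain ⟨x, hxA, hxB⟩ := not_subset.1 fun hs : A ⊆ B => hF.isAntichain hA hB hAB hs
  obtain ⟨T, hTA, hxT, hTc⟩ := exists_subset_card_eq_mem hxA (j := k - 1) (by omega)
    (by have := card_le_card (inter_subset_left (s₁ := A) (s₂ := B)); omega)
  -- `A` is the only edge through `T`: a second one, `E`, would give `|A ∪ B ∪ E| ≤ 3r - 2k`.
  refine hcodeg T hTc <| card_eq_one.2
    ⟨A, eq_singleton_iff_unique_mem.2 ⟨mem_filter.2 ⟨hA, hTA⟩, fun E hE => ?_⟩⟩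
  rw [mem_filter] at hE
  by_contra hEA
  have hEB : E ≠ B := fun h => hxB (h ▸ hE.2 hxT)
  have := card_union_three_add_le (subset_refl (A ∩ B))
    (subset_inter (hTA.trans subset_union_left) hE.2)
  have := hF3 A hA B hB E hE.1 hAB (Ne.symm hEA) (Ne.symm hEB)
  rw [hF hA, hF hB, hF hE.1] at *
  omega

lemma eq_of_two_le_codegree (hk : 2 ≤ k)
    (hcodeg : ∀ T : Finset α, #T = k - 1 → codegree F T ≠ 1)
    {A S T : Finset α} (hA : A ∈ F) (hS : #S = k) (hT : #T = k) (hSA : S ⊆ A) (hTA : T ⊆ A)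
    (hS2 : 2 ≤ codegree F S) (hT2 : 2 ≤ codegree F T) : S = T := by
  obtain ⟨B, hB, hBA⟩ := exists_mem_ne (by exact hS2 : 1 < codegree F S) A
  obtain ⟨C, hC, hCA⟩ := exists_mem_ne (by exact hT2 : 1 < codegree F T) A
  rw [mem_filter] at hB hC
  by_contra hST
  have hST' : #S < #(S ∪ T) := card_lt_card <| subset_union_left.ssubset_of_ne fun h =>
    hST (eq_of_subset_of_card_le (h ▸ subset_union_right) (by omega)).symm
  by_cases hBC : B = C
  · subst hBC
    have := card_le_card (union_subset (subset_inter hSA hB.2) (subset_inter hTA hC.2))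
    have := card_inter_le_of_codegree_ne_one hF hF3 hk hcodeg hA hB.1 hBA.symm
    omega
  · have := card_union_three_add_le (subset_inter hSA hB.2)
      (subset_inter (hTA.trans subset_union_left) hC.2)
    have := hF3 A hA B hB.1 C hC.1 hBA.symm hCA.symm hBC
    rw [hF hA, hF hB.1, hF hC.1, hS, hT] at *
    omega

theorem two_mul_choose_mul_card_le [Fintype α] (hk : 2 ≤ k)
    (hcodeg : ∀ T : Finset α, #T = k - 1 → codegree F T ≠ 1) :
    2 * (r.choose k * #F) ≤ 2 * (Fintype.card α).choose k + #F := by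
  set D := (powersetCard k (univ : Finset α)).filter (2 ≤ codegree F ·)
  have hsum : r.choose k * #F ≤ (Fintype.card α).choose k + #D := by
    rw [← sum_codegree_powersetCard hF, ← card_univ, ← card_powersetCard, card_filter,
      card_eq_sum_ones, ← sum_add_distrib]
    exact sum_le_sum fun S hS => by
      have := codegree_le_two hF hF3 (mem_powersetCard.1 hS).2
      split_ifs <;> omega
  -- Count pairs `S ⊆ A` with `S ∈ D`, `A ∈ F`: at least two per `S`, at most one per `A`.
  have hD : #D • 2 ≤ #F • 1 := card_nsmul_le_card_nsmul (R := ℕ) (fun S A : Finset α => S ⊆ A)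
    (fun S hS => (mem_filter.1 hS).2) fun A hA => card_le_one.2 fun S hS T hT => by
      simp only [bipartiteBelow, D, mem_filter, mem_powersetCard] at hS hT
      obtain ⟨⟨⟨-, hSk⟩, hS2⟩, hSA⟩ := hS
      obtain ⟨⟨⟨-, hTk⟩, hT2⟩, hTA⟩ := hT
      exact eq_of_two_le_codegree hF hF3 hk hcodeg hA hSk hTk hSA hTA hS2 hT2
  rw [smul_eq_mul, smul_eq_mul] at hD
  omega

theorem choose_mul_card_le [Fintype α] (hk : 2 ≤ k) (hkr : k ≤ r)
    (hcodeg : ∀ T : Finset α, #T = k - 1 → codegree F T ≠ 1) :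
    (r.choose k : ℝ) * #F ≤
      2 * r.choose k / (2 * r.choose k - 1) * (Fintype.card α).choose k := by
  have hC : (1 : ℝ) ≤ r.choose k := by exact_mod_cast Nat.choose_pos hkr
  have h : 2 * ((r.choose k : ℝ) * #F) ≤ 2 * (Fintype.card α).choose k + #F := by
    exact_mod_cast two_mul_choose_mul_card_le hF hF3 hk hcodeg
  rw [div_mul_eq_mul_div, le_div_iff₀ (by linarith)]
  nlinarith

end Counting

-- Deleting the only edge through a `j`-set leaves that `j`-set uncovered.
theorem card_le_add_card_biUnion_powersetCard {P : Finset (Finset α) → Prop}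
    (hP : ∀ H A, P H → P (H.erase A)) (j : ℕ) {b : ℝ}
    (hb : ∀ H, P H → (∀ T : Finset α, #T = j → codegree H T ≠ 1) → (#H : ℝ) ≤ b)
    (H : Finset (Finset α)) (hH : P H) :
    (#H : ℝ) ≤ b + #(H.biUnion (powersetCard j)) := by
  induction H using strongInduction with
  | H H ih =>
  by_cases hgood : ∀ T : Finset α, #T = j → codegree H T ≠ 1
  · exact le_add_of_le_of_nonneg (hb H hH hgood) (Nat.cast_nonneg _)
  push Not at hgood
  obtain ⟨T, hTj, hT1⟩ := hgood
  obtain ⟨A, hA⟩ := card_eq_one.1 hT1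
  have hAT : A ∈ H ∧ T ⊆ A := mem_filter.1 (hA ▸ mem_singleton_self A)
  have ih' := ih (H.erase A) (erase_ssubset hAT.1) (hP H A hH)
  have hlt : #((H.erase A).biUnion (powersetCard j)) < #(H.biUnion (powersetCard j)) := by
    refine card_lt_card ⟨biUnion_subset_biUnion_of_subset_left _ (erase_subset _ _), ?_⟩
    refine not_subset.2 ⟨T, mem_biUnion.2 ⟨A, hAT.1, mem_powersetCard.2 ⟨hAT.2, hTj⟩⟩, ?_⟩
    simp only [mem_biUnion, mem_powersetCard, mem_erase, not_exists, not_and]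
    exact fun B ⟨hBA, hB⟩ hTB _ => hBA (mem_singleton.1 (hA ▸ mem_filter.2 ⟨hB, hTB⟩))
  have hlt' : (#((H.erase A).biUnion (powersetCard j)) : ℝ) + 1 ≤
      #(H.biUnion (powersetCard j)) := by
    exact_mod_cast hlt
  rw [← card_erase_add_one hAT.1]
  push_cast
  linarith

lemma card_biUnion_powersetCard_le [Fintype α] (H : Finset (Finset α)) (j : ℕ) :
    #(H.biUnion (powersetCard j)) ≤ (Fintype.card α).choose j := by
  rw [← card_univ, ← card_powersetCard]
  exact card_le_card <| biUnion_subset.2 fun A _ => powersetCard_mono (subset_univ A)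

lemma triplesSpanMoreThan_of_card_sup {v : ℕ} {H : Finset (Finset α)}
    (h : ∀ S ⊆ H, #S = 3 → v + 1 ≤ #(S.sup id)) : TriplesSpanMoreThan v H := by
  intro A hA B hB C hC hAB hAC hBC
  simpa [union_assoc] using h {A, B, C} (by simp [insert_subset_iff, *])
    (card_eq_three.2 ⟨A, B, C, hAB, hAC, hBC, rfl⟩)

end Hypergraph

lemma exists_card_eq_sparseTuranNumber (n r v : ℕ) {e : ℕ} (he : e ≠ 0) :
    ∃ H : Finset (Finset (Fin n)), (∀ A ∈ H, #A = r) ∧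
      (∀ S ⊆ H, #S = e → v + 1 ≤ #(S.sup id)) ∧ #H = sparseTuranNumber n r v e :=
  Nat.sSup_mem (s := {m | ∃ H : Finset (Finset (Fin n)), (∀ A ∈ H, #A = r) ∧
      (∀ S ⊆ H, #S = e → v + 1 ≤ #(S.sup id)) ∧ #H = m})
    ⟨0, ∅, by simp, fun S hS hSe => by simp_all, rfl⟩
    ⟨Fintype.card (Finset (Fin n)), fun _ ⟨H, _, _, hH⟩ => hH ▸ card_le_univ H⟩

theorem upper_bound_counting (n r k : ℕ) (hk : 2 ≤ k) (hrk : k < r) :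
    (∀ F : Finset (Finset (Fin n)), (∀ A ∈ F, A.card = r) →
      (∀ A ∈ F, ∀ B ∈ F, ∀ C ∈ F, A ≠ B → A ≠ C → B ≠ C →
        3 * r - 2 * k + 1 ≤ (A ∪ B ∪ C).card) →
      (∀ T : Finset (Fin n), T.card = k - 1 →
        (F.filter (fun A => T ⊆ A)).card ≠ 1) →
      (r.choose k : ℝ) * F.card ≤
        (2 * r.choose k) / (2 * r.choose k - 1) * n.choose k) ∧
    (sparseTuranNumber n r (3 * r - 2 * k) 3 : ℝ) ≤
      (2 * r.choose k) / (2 * r.choose k - 1) * (n.choose k) / (r.choose k)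
        + n.choose (k - 1) := by
  have part1 : ∀ F : Finset (Finset (Fin n)), (F : Set (Finset (Fin n))).Sized r →
      TriplesSpanMoreThan (3 * r - 2 * k) F → (∀ T : Finset (Fin n), #T = k - 1 →
        codegree F T ≠ 1) → (r.choose k : ℝ) * #F ≤
          (2 * r.choose k) / (2 * r.choose k - 1) * n.choose k := fun F hF hF3 hcodeg => by
    simpa using choose_mul_card_le hF hF3 hk hrk.le hcodeg
  refine ⟨fun F hF => part1 F fun A hA => hF A hA, ?_⟩
  obtain ⟨H, hH, hH3, hcard⟩ :=
    exists_card_eq_sparseTuranNumber n r (3 * r - 2 * k) three_ne_zero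
  have hC : (0 : ℝ) < r.choose k := by exact_mod_cast Nat.choose_pos hrk.le
  rw [← hcard]
  calc (#H : ℝ)
      ≤ 2 * r.choose k / (2 * r.choose k - 1) * n.choose k / r.choose k
          + #(H.biUnion (powersetCard (k - 1))) :=
        card_le_add_card_biUnion_powersetCard
          (P := fun H => (H : Set (Finset (Fin n))).Sized r ∧
            TriplesSpanMoreThan (3 * r - 2 * k) H)
          (fun H A hH => ⟨hH.1.mono (by simp), hH.2.mono (erase_subset _ _)⟩) (k - 1)
          (fun H hH hcodeg => by
            rw [le_div_iff₀ hC, mul_comm]; exact part1 H hH.1 hH.2 hcodeg)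
          H ⟨fun A hA => hH A hA, triplesSpanMoreThan_of_card_sup hH3⟩
    _ ≤ _ := by
      gcongr
      simpa using card_biUnion_powersetCard_le H (k - 1)
end

section
/- Let M be an r × q^k matrix over an alphabet Q of size q that is strongly 3-perfect hashing. Then the r-partite r-uniform hypergraph H_M induced by M (with vertex set the disjoint union of V_1,...,V_r where V_i = {i} × Q, and with edges A_j = {(1, c_{1,j}), ..., (r, c_{r,j})} for each column j) is G_r(3r-2k, 3)-free: any three distinct edges span at least 3r - 2k + 1 vertices. -/
open Finset

lemma card_triple {α : Type*} [DecidableEq α] (a b c : α) :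
    ({a,b,c} : Finset α).card =
      1 + (if a = b ∧ b = c then 0 else 1) + (if a ≠ b ∧ a ≠ c ∧ b ≠ c then 1 else 0) := by
  by_cases h1 : a = b <;> by_cases h2 : a = c <;> by_cases h3 : b = c <;>
    simp_all [Finset.card_insert_of_notMem, Finset.insert_comm]

/-- A strongly 3-perfect hashing r × q^k matrix induces a G_r(3r-2k,3)-free
r-partite r-graph: any three distinct columns give edges spanning at least
3r - 2k + 1 vertices. -/
theorem strongly_perfect_hashing_gives_sparse (r k q : ℕ) (hk : 2 ≤ k) (hrk : k < r)
    (Q : Type*) [DecidableEq Q] [Fintype Q] (hQ : Fintype.card Q = q)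
    (M : Fin r → Fin (q ^ k) → Q)
    (hSPH : ∀ j₁ j₂ j₃ : Fin (q ^ k),
      (fun i => M i j₁) ≠ (fun i => M i j₂) →
      (fun i => M i j₁) ≠ (fun i => M i j₃) →
      (fun i => M i j₂) ≠ (fun i => M i j₃) →
      (r : ℤ) - 2 * k +
          ((univ.filter (fun i : Fin r => M i j₁ = M i j₂ ∧ M i j₂ = M i j₃)).card : ℤ)
        < ((univ.filter (fun i : Fin r =>
            M i j₁ ≠ M i j₂ ∧ M i j₁ ≠ M i j₃ ∧ M i j₂ ≠ M i j₃)).card : ℤ)) :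
    ∀ j₁ j₂ j₃ : Fin (q ^ k),
      (fun i => M i j₁) ≠ (fun i => M i j₂) →
      (fun i => M i j₁) ≠ (fun i => M i j₃) →
      (fun i => M i j₂) ≠ (fun i => M i j₃) →
      3 * r - 2 * k + 1 ≤
        ((univ.image (fun i : Fin r => (i, M i j₁))) ∪
         (univ.image (fun i : Fin r => (i, M i j₂))) ∪
         (univ.image (fun i : Fin r => (i, M i j₃)))).card := by
  intro j₁ j₂ j₃ h12 h13 h23
  have key : ((univ.image (fun i : Fin r => (i, M i j₁))) ∪
         (univ.image (fun i : Fin r => (i, M i j₂))) ∪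
         (univ.image (fun i : Fin r => (i, M i j₃))))
      = univ.biUnion (fun i : Fin r =>
          ({(i, M i j₁), (i, M i j₂), (i, M i j₃)} : Finset (Fin r × Q))) := by
    ext ⟨i, a⟩
    simp only [Finset.mem_union, Finset.mem_image, Finset.mem_univ, true_and,
      Finset.mem_biUnion, Finset.mem_insert, Finset.mem_singleton, Prod.mk.injEq]
    constructor
    · rintro ((⟨x, hx, ha⟩ | ⟨x, hx, ha⟩) | ⟨x, hx, ha⟩) <;>
        exact ⟨i, by subst hx; tauto⟩
    · rintro ⟨x, (⟨rfl, ha⟩ | ⟨rfl, ha⟩ | ⟨rfl, ha⟩)⟩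
      · exact Or.inl (Or.inl ⟨i, rfl, ha.symm⟩)
      · exact Or.inl (Or.inr ⟨i, rfl, ha.symm⟩)
      · exact Or.inr ⟨i, rfl, ha.symm⟩
  rw [key, Finset.card_biUnion (by
    intro x _ y _ hxy
    simp only [Finset.disjoint_left, Finset.mem_insert, Finset.mem_singleton]
    rintro a (rfl | rfl | rfl) h' <;> rcases h' with h' | h' | h' <;>
      exact absurd (congrArg Prod.fst h') hxy)]
  have hsum : ∀ i : Fin r,
      ({(i, M i j₁), (i, M i j₂), (i, M i j₃)} : Finset (Fin r × Q)).card
        = ({M i j₁, M i j₂, M i j₃} : Finset Q).card := by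
    intro i
    have : ({(i, M i j₁), (i, M i j₂), (i, M i j₃)} : Finset (Fin r × Q))
        = ({M i j₁, M i j₂, M i j₃} : Finset Q).image (Prod.mk i) := by
      simp [Finset.image_insert]
    rw [this, Finset.card_image_of_injective _ (fun a b h => by simpa using h)]
  simp only [hsum, card_triple]
  rw [Finset.sum_add_distrib, Finset.sum_add_distrib, Finset.sum_const, smul_eq_mul, mul_one]
  have e1 : (∑ i : Fin r, if M i j₁ = M i j₂ ∧ M i j₂ = M i j₃ then 0 else 1)
      = (univ.filter (fun i : Fin r => ¬(M i j₁ = M i j₂ ∧ M i j₂ = M i j₃))).card := by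
    rw [Finset.card_filter]
    exact Finset.sum_congr rfl fun i _ => by by_cases h : M i j₁ = M i j₂ ∧ M i j₂ = M i j₃ <;> simp [h]
  have e2 : (∑ i : Fin r, if M i j₁ ≠ M i j₂ ∧ M i j₁ ≠ M i j₃ ∧ M i j₂ ≠ M i j₃ then 1 else 0)
      = (univ.filter (fun i : Fin r =>
          M i j₁ ≠ M i j₂ ∧ M i j₁ ≠ M i j₃ ∧ M i j₂ ≠ M i j₃)).card := by
    rw [Finset.card_filter]
  rw [e1, e2, Finset.filter_not, Finset.card_sdiff_of_subset (Finset.filter_subset _ _)]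
  have hA : (univ.filter (fun i : Fin r => M i j₁ = M i j₂ ∧ M i j₂ = M i j₃)).card ≤ r := by
    exact le_trans (Finset.card_filter_le _ _) (by simp)
  have hcard : (univ : Finset (Fin r)).card = r := by simp
  rw [hcard]
  have h := hSPH j₁ j₂ j₃ h12 h13 h23
  omega
end

section
/- Any G_r(3r-2k,3)-free r-partite r-uniform hypergraph with all r vertex parts of size q has at most 2q^k edges. -/
open Finset

/-!
Fix a set `S` of `k` parts. Three edges with the same vertices in every part of `S` share those
`k` vertices, so together they span at most `k + 3 (r - k) = 3r - 2k` vertices; hence, in a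
`G_r(3r-2k,3)`-free hypergraph, each of the `q ^ k` possible choices of one vertex in every part
of `S` lies in at most two edges.
-/

namespace Multipartite

variable {ι α : Type*} [DecidableEq ι] [DecidableEq α]

def verticesIn (A : Finset (ι × α)) (i : ι) : Finset α :=
  {x ∈ A | x.1 = i}.image Prod.snd

theorem card_verticesIn (A : Finset (ι × α)) (i : ι) :
    #(verticesIn A i) = #{x ∈ A | x.1 = i} :=
  card_image_of_injOn fun _ hx _ hy hxy =>
    Prod.ext ((mem_filter.1 hx).2.trans (mem_filter.1 hy).2.symm) hxy

theorem verticesIn_union (A B : Finset (ι × α)) (i : ι) :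
    verticesIn (A ∪ B) i = verticesIn A i ∪ verticesIn B i := by
  simp only [verticesIn, filter_union, image_union]

variable [Fintype ι]

theorem card_eq_sum_card_verticesIn (A : Finset (ι × α)) :
    #A = ∑ i, #(verticesIn A i) := by
  simp only [card_verticesIn]
  exact card_eq_sum_card_fiberwise fun _ _ => mem_univ _

theorem card_union_union_le_of_verticesIn_eq {A B C : Finset (ι × α)} (S : Finset ι)
    (hA : ∀ i, #(verticesIn A i) = 1) (hB : ∀ i, #(verticesIn B i) = 1)
    (hC : ∀ i, #(verticesIn C i) = 1)
    (hAB : ∀ i ∈ S, verticesIn B i = verticesIn A i)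
    (hAC : ∀ i ∈ S, verticesIn C i = verticesIn A i) :
    #(A ∪ B ∪ C) ≤ 3 * Fintype.card ι - 2 * #S := by
  set m : ι → ℕ := fun i => #(verticesIn (A ∪ B ∪ C) i)
  have hm_in : ∀ i ∈ S, m i ≤ 1 := fun i hi => by
    simp only [m, verticesIn_union, hAB i hi, hAC i hi, union_self, hA i, le_refl]
  have hm_le : ∀ i, m i ≤ 3 := fun i => calc
    m i ≤ #(verticesIn A i) + #(verticesIn B i) + #(verticesIn C i) := by
      simp only [m, verticesIn_union]
      exact (card_union_le _ _).trans (Nat.add_le_add_right (card_union_le _ _) _)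
    _ = 3 := by rw [hA, hB, hC]
  have hS : #S ≤ Fintype.card ι := card_le_univ S
  calc #(A ∪ B ∪ C) = ∑ i ∈ S, m i + ∑ i ∈ Sᶜ, m i := by
        rw [sum_add_sum_compl, card_eq_sum_card_verticesIn]
    _ ≤ ∑ _i ∈ S, 1 + ∑ _i ∈ Sᶜ, 3 :=
        Nat.add_le_add (sum_le_sum hm_in) (sum_le_sum fun i _ => hm_le i)
    _ = 3 * Fintype.card ι - 2 * #S := by
        simp only [sum_const, card_compl, smul_eq_mul]
        omega

variable [Fintype α]

theorem card_le_two_mul_pow (H : Finset (Finset (ι × α))) (S : Finset ι)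
    (hpartite : ∀ A ∈ H, ∀ i, #{x ∈ A | x.1 = i} = 1)
    (hfree : ∀ A ∈ H, ∀ B ∈ H, ∀ C ∈ H, A ≠ B → A ≠ C → B ≠ C →
      3 * Fintype.card ι - 2 * #S + 1 ≤ #(A ∪ B ∪ C)) :
    #H ≤ 2 * Fintype.card α ^ #S := by
  have hsingle : ∀ A ∈ H, ∀ i, #(verticesIn A i) = 1 := fun A hA i => by
    rw [card_verticesIn, hpartite A hA i]
  let restrict (A : Finset (ι × α)) : S → Finset α := fun i => verticesIn A i
  let singletonChoices : Finset (S → Finset α) :=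
    Fintype.piFinset fun _ => powersetCard 1 univ
  have hmaps : ∀ A ∈ H, restrict A ∈ singletonChoices := fun A hA =>
    Fintype.mem_piFinset.2 fun i => mem_powersetCard.2 ⟨subset_univ _, hsingle A hA i⟩
  have hfiber : ∀ g ∈ singletonChoices, #{A ∈ H | restrict A = g} ≤ 2 := by
    intro g _
    by_contra! h
    obtain ⟨A, hA, B, hB, C, hC, hAB, hAC, hBC⟩ := two_lt_card.1 h
    simp only [mem_filter] at hA hB hC
    have hagree : ∀ {D}, restrict D = g → ∀ i ∈ S, verticesIn D i = verticesIn A i :=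
      fun hD i hi => congrFun (hD.trans hA.2.symm) ⟨i, hi⟩
    have hsmall := card_union_union_le_of_verticesIn_eq S (hsingle A hA.1) (hsingle B hB.1)
      (hsingle C hC.1) (hagree hB.2) (hagree hC.2)
    have hlarge := hfree A hA.1 B hB.1 C hC.1 hAB hAC hBC
    omega
  calc #H ≤ 2 * #singletonChoices := card_le_mul_card_image_of_maps_to hmaps 2 hfiber
    _ = 2 * Fintype.card α ^ #S := by
        simp [singletonChoices, Fintype.card_piFinset]

end Multipartite

theorem multipartite_upper_bound_general (r k q : ℕ) (hrk : k < r)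
    (H : Finset (Finset (Fin r × Fin q)))
    (hpartite : ∀ A ∈ H, ∀ i : Fin r, (A.filter (fun x => x.1 = i)).card = 1)
    (hfree : ∀ A ∈ H, ∀ B ∈ H, ∀ C ∈ H, A ≠ B → A ≠ C → B ≠ C →
      3 * r - 2 * k + 1 ≤ (A ∪ B ∪ C).card) :
    H.card ≤ 2 * q ^ k := by
  let firstParts : Finset (Fin r) := univ.map (Fin.castLEEmb hrk.le)
  have hcard : #firstParts = k := by simp [firstParts]
  simpa [hcard] using
    Multipartite.card_le_two_mul_pow H firstParts hpartite (by simpa [hcard] using hfree)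

/-- Any G_r(3r-2k,3)-free r-partite r-graph with all parts of size q has at most
2q^k edges. -/
theorem multipartite_upper_bound (r k q : ℕ) (hk : 2 ≤ k) (hrk : k < r)
    (H : Finset (Finset (Fin r × Fin q)))
    (hpartite : ∀ A ∈ H, ∀ i : Fin r, (A.filter (fun x => x.1 = i)).card = 1)
    (hfree : ∀ A ∈ H, ∀ B ∈ H, ∀ C ∈ H, A ≠ B → A ≠ C → B ≠ C →
      3 * r - 2 * k + 1 ≤ (A ∪ B ∪ C).card) :
    H.card ≤ 2 * q ^ k :=
  multipartite_upper_bound_general r k q hrk H hpartite hfree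
end

section
/- Let q be a prime power with q > 4^r k^2 and r > k ≥ 2. Then there exist at least q^r - 4^r k^2 q^{r-1} > 0 vectors v ∈ F_q^r such that the r × q^k matrix F_q^{<k}[x,v] (columns indexed by polynomials f of degree < k, with column entries f(α_1),...,f(α_r)) is strongly 3-perfect hashing. -/
open Polynomial Finset Module

/-!
Let `f₁, f₂, f₃` be distinct of degree `< k`, let `h = gcd (f₁ - f₂) (f₂ - f₃)` and write
`f₁ - f₂ = h u`, `f₂ - f₃ = h w`, so that `u` and `w` have degree `< n := k - deg h`. A row `i`
where exactly two of the `f`'s agree at `v i` is a root of `u`, of `u + w` or of `w`, since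
`h (v i) ≠ 0` there; a row where all three agree is a root of `h`. For injective `v`, if at most
`r - 2k + |I|` rows separate the three columns, root counting leaves at least `2n` rows of the
first kind and fewer than `n` of each of its three types. Labelling `2n` of them by their type
(`κ : Fin r → Fin 4`, with `0` for the other rows), `v` becomes a zero of the determinant of a
square linear system in the coefficients of `(u, w)`.

This determinant has total degree `≤ n (n - 1)` in `v`, and it is not the zero polynomial by
Füredi's lemma: once the rows of types `1` and `3` sit at distinct points, the admissible pairs
`(u, w)` form a space whose dimension is the number of rows of type `2` and on which `u + w` is
injective, so that many further points separate it. The Schwartz–Zippel lemma then bounds the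
zeros of each of the `4 ^ r` determinants by `k (k - 1) q ^ (r - 1)`, and those of each
`X i - X j`, which cover the non-injective `v`, by `q ^ (r - 1)`.
-/

theorem Module.Dual.exists_fin_finrank_separating {K V T : Type*} [Field K] [AddCommGroup V]
    [Module K V] [FiniteDimensional K V] (f : T → Module.Dual K V)
    (hf : ∀ x, (∀ t, f t x = 0) → x = 0) :
    ∃ z : Fin (finrank K V) → T, ∀ x, (∀ a, f (z a) x = 0) → x = 0 := by
  induction hV : finrank K V generalizing V with
  | zero => exact ⟨Fin.elim0, fun x _ => finrank_zero_iff_forall_zero.mp hV x⟩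
  | succ m ih =>
    have : Nontrivial V := Module.nontrivial_of_finrank_eq_succ hV
    obtain ⟨x₀, hx₀⟩ := exists_ne (0 : V)
    obtain ⟨t, ht⟩ : ∃ t, f t x₀ ≠ 0 := by
      by_contra! h
      exact hx₀ (hf x₀ h)
    have hker : finrank K (LinearMap.ker (f t)) = m := by
      have := (f t).finrank_ker_add_one_of_ne_zero fun h => ht (by simp [h])
      omega
    obtain ⟨z, hz⟩ := ih (fun s => (f s).comp (LinearMap.ker (f t)).subtype)
      (fun x hx => Subtype.ext (hf x hx)) hker
    refine ⟨Fin.cons t z, fun x hx => ?_⟩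
    simpa using congrArg Subtype.val (hz ⟨x, hx 0⟩ fun a => hx a.succ)

theorem MvPolynomial.totalDegree_det_le {ι σ R : Type*} [Fintype ι] [DecidableEq ι] [CommRing R]
    (M : Matrix ι ι (MvPolynomial σ R)) (d : ι → ℕ) (hM : ∀ i j, (M i j).totalDegree ≤ d j) :
    M.det.totalDegree ≤ ∑ j, d j := by
  rw [Matrix.det_apply']
  refine (totalDegree_finsetSum _ _).trans (Finset.sup_le fun τ _ => ?_)
  refine (totalDegree_mul _ _).trans ?_
  rw [← map_intCast (C : R →+* MvPolynomial σ R), totalDegree_C, zero_add]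
  exact (totalDegree_finsetProd _ _).trans (Finset.sum_le_sum fun j _ => hM _ _)

theorem MvPolynomial.card_zeros_mul_le {R : Type*} [CommRing R] [IsDomain R] [Fintype R]
    [DecidableEq R] {r : ℕ} {p : MvPolynomial (Fin r) R} (hp : p ≠ 0) :
    #{v | eval v p = 0} * Fintype.card R ≤ p.totalDegree * Fintype.card R ^ r := by
  have hq : (0 : ℚ≥0) < Fintype.card R := by exact_mod_cast Fintype.card_pos
  have := schwartz_zippel_totalDegree hp univ
  rw [Fintype.piFinset_univ, card_univ, div_le_div_iff₀ (by positivity) hq] at this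
  exact_mod_cast this

theorem Finset.exists_injOn_of_card_le {σ F : Type*} [Fintype F] [Nonempty F] {s : Finset σ}
    (hs : #s ≤ Fintype.card F) : ∃ v : σ → F, Set.InjOn v s := by
  obtain ⟨f⟩ := Function.Embedding.nonempty_of_card_le (α := s) (β := F) (by simpa using hs)
  exact Set.exists_injOn_iff_injective.mpr ⟨f, f.injective⟩

namespace Polynomial

section

variable {R σ : Type*}

theorem natDegree_lt_of_mem_degreeLT [Semiring R] {n : ℕ} {p : R[X]} (hp : p ≠ 0)
    (h : p ∈ R[X]_n) : p.natDegree < n :=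
  (natDegree_lt_iff_degree_lt hp).mpr (mem_degreeLT.mp h)

theorem mem_degreeLT_of_natDegree_lt [Semiring R] {n : ℕ} {p : R[X]} (h : p.natDegree < n) :
    p ∈ R[X]_n :=
  mem_degreeLT.mpr (degree_le_natDegree.trans_lt (by exact_mod_cast h))

theorem eq_zero_of_mem_degreeLT_of_forall_eval_eq_zero [CommRing R] [IsDomain R] [Fintype R]
    {n : ℕ} {p : R[X]} (hn : n ≤ Fintype.card R) (hp : p ∈ R[X]_n) (h : ∀ x, p.eval x = 0) :
    p = 0 := by
  by_contra hne
  exact hne <| eq_zero_of_natDegree_lt_card_of_eval_eq_zero p Function.injective_id h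
    ((natDegree_lt_of_mem_degreeLT hne hp).trans_le hn)

theorem card_le_natDegree_of_eval_eq_zero [CommRing R] [IsDomain R] {p : R[X]} (hp : p ≠ 0)
    {v : σ → R} {s : Finset σ} (hv : Set.InjOn v s) (h : ∀ i ∈ s, p.eval (v i) = 0) :
    #s ≤ p.natDegree := by
  by_contra! hlt
  exact hp <| eq_zero_of_natDegree_lt_card_of_eval_eq_zero p (f := fun i : s => v i)
    (fun i j hij => Subtype.ext (hv i.2 j.2 hij)) (fun i => h i i.2) (by simpa using hlt)

end

variable {F σ : Type*} [Field F]

noncomputable def degreeLT.evalOn (n : ℕ) (v : σ → F) (s : Finset σ) : F[X]_n →ₗ[F] s → F :=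
  LinearMap.pi fun i => leval (v i) ∘ₗ (F[X]_n).subtype

namespace degreeLT

@[simp]
theorem evalOn_apply (n : ℕ) (v : σ → F) (s : Finset σ) (p : F[X]_n) (i : s) :
    evalOn n v s p i = (p : F[X]).eval (v i) := rfl

theorem evalOn_surjective [DecidableEq σ] {n : ℕ} {v : σ → F} {s : Finset σ}
    (hv : Set.InjOn v s) (hs : #s ≤ n) : Function.Surjective (evalOn n v s) := fun t =>
  ⟨⟨_, degreeLT_mono hs ((Lagrange.funEquivDegreeLT hv).symm t).2⟩,
    (Lagrange.funEquivDegreeLT hv).apply_symm_apply t⟩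

theorem finrank_ker_evalOn_prodMap [DecidableEq σ] {n : ℕ} {v : σ → F} {s t : Finset σ}
    (hvs : Set.InjOn v s) (hvt : Set.InjOn v t) (hs : #s ≤ n) (ht : #t ≤ n) :
    finrank F (LinearMap.ker ((evalOn n v s).prodMap (evalOn n v t))) + #s + #t = 2 * n := by
  have := LinearMap.finrank_range_add_finrank_ker ((evalOn n v s).prodMap (evalOn n v t))
  rw [LinearMap.range_eq_top.mpr (Prod.map_surjective.mpr
    ⟨evalOn_surjective hvs hs, evalOn_surjective hvt ht⟩)] at this
  have hn : finrank F F[X]_n = n := by simp [(degreeLTEquiv F n).finrank_eq]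
  simp only [finrank_top, Module.finrank_prod, Module.finrank_fintype_fun_eq_card,
    Fintype.card_coe, hn] at this
  omega

theorem eq_zero_of_mem_ker_evalOn_prodMap [DecidableEq σ] {n : ℕ} {v : σ → F}
    {s t : Finset σ} (hv : Set.InjOn v ↑(s ∪ t)) (hst : Disjoint s t) (hcard : n ≤ #s + #t)
    {y : F[X]_n × F[X]_n} (hy : y ∈ LinearMap.ker ((evalOn n v s).prodMap (evalOn n v t)))
    (hsum : (y.1 + y.2 : F[X]) = 0) : y = 0 := by
  simp only [LinearMap.mem_ker, LinearMap.prodMap_apply, Prod.mk_eq_zero, funext_iff,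
    evalOn_apply, Pi.zero_apply, Subtype.forall] at hy
  have hy₁ : (y.1 : F[X]) = 0 := by
    by_contra hne
    have hroots := card_le_natDegree_of_eval_eq_zero hne hv fun i hi => by
      rcases mem_union.mp hi with hi | hi
      · exact hy.1 i hi
      · simpa [eq_neg_of_add_eq_zero_left hsum] using hy.2 i hi
    have := natDegree_lt_of_mem_degreeLT hne y.1.2
    rw [card_union_of_disjoint hst] at hroots
    omega
  rw [hy₁, zero_add] at hsum
  exact Prod.ext (Subtype.ext hy₁) (Subtype.ext hsum)

theorem exists_fin_separating_ker_evalOn_prodMap [DecidableEq σ] [Fintype F] {n : ℕ}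
    {v : σ → F} {s t : Finset σ} (hv : Set.InjOn v ↑(s ∪ t)) (hst : Disjoint s t) (hs : #s ≤ n)
    (ht : #t ≤ n) (hcard : n ≤ #s + #t) (hn : n ≤ Fintype.card F) :
    ∃ z : Fin (2 * n - #s - #t) → F,
      ∀ y ∈ LinearMap.ker ((evalOn n v s).prodMap (evalOn n v t)),
        (∀ a, (y.1 + y.2 : F[X]).eval (z a) = 0) → y = 0 := by
  have hK := finrank_ker_evalOn_prodMap (hv.mono subset_union_left) (hv.mono subset_union_right)
    hs ht
  set K := LinearMap.ker ((evalOn n v s).prodMap (evalOn n v t))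
  replace hK : finrank F K = 2 * n - #s - #t := by omega
  -- `y ↦ y.1 + y.2` is injective on `K`, so its evaluations at the points of `F` separate `K`
  have hsep (y : K)
      (hy : ∀ x, ((y : F[X]_n × F[X]_n).1 + (y : F[X]_n × F[X]_n).2 : F[X]).eval x = 0) :
      y = 0 :=
    Subtype.ext (eq_zero_of_mem_ker_evalOn_prodMap hv hst hcard y.2
      (eq_zero_of_mem_degreeLT_of_forall_eval_eq_zero hn (add_mem y.1.1.2 y.1.2.2) hy))
  obtain ⟨z, hz⟩ := Module.Dual.exists_fin_finrank_separating
    (fun x => leval x ∘ₗ (F[X]_n).subtype.coprod (F[X]_n).subtype ∘ₗ K.subtype)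
    fun y hy => hsep y (by simpa using hy)
  refine ⟨z ∘ Fin.cast hK.symm, fun y hy hyz => congrArg Subtype.val (hz ⟨y, hy⟩ fun a => ?_)⟩
  simpa using hyz (Fin.cast hK a)

end degreeLT

end Polynomial

def coincidenceLabel {α : Type*} [DecidableEq α] (a b c : α) : Fin 4 :=
  if a = b then (if b = c then 0 else 1) else if a = c then 2 else if b = c then 3 else 0

theorem coincidenceLabel_eq_zero {α : Type*} [DecidableEq α] {a b c : α}
    (h : coincidenceLabel a b c = 0) : (a = b ∧ b = c) ∨ (a ≠ b ∧ a ≠ c ∧ b ≠ c) := by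
  unfold coincidenceLabel at h
  split_ifs at h <;> simp_all

/-- A row labelled `j` asks `labelPoly j u w` to vanish at its point: labels `1, 2, 3` ask this
of `u`, `u + w`, `w`, the rows where `f₁ = f₂`, `f₁ = f₃`, `f₂ = f₃`; label `0` asks nothing. -/
def uWeight : Fin 4 → ℕ := ![0, 1, 1, 0]

def wWeight : Fin 4 → ℕ := ![0, 0, 1, 1]

section Pattern

variable {F σ : Type*} [Field F]

noncomputable def labelPoly (j : Fin 4) (u w : F[X]) : F[X] :=
  (uWeight j : F) • u + (wWeight j : F) • w

theorem labelPoly_mem_degreeLT {n : ℕ} (j : Fin 4) {u w : F[X]} (hu : u ∈ F[X]_n)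
    (hw : w ∈ F[X]_n) : labelPoly j u w ∈ F[X]_n :=
  add_mem (Submodule.smul_mem _ _ hu) (Submodule.smul_mem _ _ hw)

theorem labelPoly_mul (j : Fin 4) (h u w : F[X]) :
    labelPoly j (h * u) (h * w) = h * labelPoly j u w := by
  simp only [labelPoly, mul_add, mul_smul_comm]

theorem labelPoly_sub_ne_zero {j : Fin 4} (hj : j ≠ 0) {f₁ f₂ f₃ : F[X]} (h₁₂ : f₁ ≠ f₂)
    (h₁₃ : f₁ ≠ f₃) (h₂₃ : f₂ ≠ f₃) : labelPoly j (f₁ - f₂) (f₂ - f₃) ≠ 0 := by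
  fin_cases j <;> simp_all [labelPoly, uWeight, wWeight, sub_eq_zero]

theorem eval_labelPoly_coincidenceLabel [DecidableEq F] (f₁ f₂ f₃ : F[X]) (x : F) :
    (labelPoly (coincidenceLabel (f₁.eval x) (f₂.eval x) (f₃.eval x)) (f₁ - f₂) (f₂ - f₃)).eval x
      = 0 := by
  unfold coincidenceLabel
  split_ifs <;> simp_all [labelPoly, uWeight, wWeight]

noncomputable def patternMap (n : ℕ) (κ : σ → Fin 4) (v : σ → F) :
    (F[X]_n × F[X]_n) →ₗ[F] σ → F where
  toFun y i := (labelPoly (κ i) y.1 y.2).eval (v i)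
  map_add' y y' := by
    ext i
    simp only [labelPoly, Prod.fst_add, Prod.snd_add, Submodule.coe_add, smul_add, eval_add,
      Pi.add_apply]
    ring
  map_smul' c y := by
    ext i
    simp only [labelPoly, Prod.smul_fst, Prod.smul_snd, Submodule.coe_smul, eval_add, eval_smul,
      smul_eq_mul, RingHom.id_apply, Pi.smul_apply]
    ring

theorem patternMap_apply (n : ℕ) (κ : σ → Fin 4) (v : σ → F) (y : F[X]_n × F[X]_n) (i : σ) :
    patternMap n κ v y i = (labelPoly (κ i) y.1 y.2).eval (v i) := rfl

/-- The labelled rows give as many equations as `(u, w)` has coefficients. -/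
def IsBalanced [Fintype σ] (n : ℕ) (κ : σ → Fin 4) : Prop :=
  #{i | κ i ≠ 0} = 2 * n ∧ ∀ j ≠ 0, #{i | κ i = j} < n

theorem IsBalanced.card_fibers [Fintype σ] {n : ℕ} {κ : σ → Fin 4} (hκ : IsBalanced n κ) :
    #{i | κ i = 1} + #{i | κ i = 2} + #{i | κ i = 3} = 2 * n := by
  have hsplit := card_filter_add_card_filter_not (s := univ) (fun i => κ i = 0)
  have hfib := card_eq_sum_card_fiberwise (s := univ) (t := univ) (f := κ) (by simp)
  rw [Fin.sum_univ_four] at hfib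
  rw [← hκ.1]
  simp only [ne_eq] at hsplit ⊢
  omega

theorem exists_isBalanced_restrict [Fintype σ] {n : ℕ} {ℓ : σ → Fin 4}
    (hlab : 2 * n ≤ #{i | ℓ i ≠ 0}) (hfib : ∀ j ≠ 0, #{i | ℓ i = j} < n) :
    ∃ κ : σ → Fin 4, IsBalanced n κ ∧ ∀ i, κ i = ℓ i ∨ κ i = 0 := by
  classical
  obtain ⟨C, hC, hCcard⟩ := exists_subset_card_eq hlab
  refine ⟨fun i => if i ∈ C then ℓ i else 0, ⟨?_, fun j hj => ?_⟩,
    fun i => by dsimp only; split_ifs <;> simp⟩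
  · rw [← hCcard]
    congr 1
    ext i
    by_cases hi : i ∈ C
    · simpa [hi] using (mem_filter.mp (hC hi)).2
    · simp [hi]
  · refine (card_le_card fun i hi => ?_).trans_lt (hfib j hj)
    by_cases hiC : i ∈ C <;> simp_all

theorem exists_isBalanced_ker_patternMap_ne_bot [Fintype σ] {n : ℕ} {ℓ : σ → Fin 4}
    {v : σ → F} (hv : Function.Injective v) {y : F[X]_n × F[X]_n}
    (hy : ∀ j ≠ 0, labelPoly j (y.1 : F[X]) y.2 ≠ 0) (hker : patternMap n ℓ v y = 0)
    (hlab : 2 * n ≤ #{i | ℓ i ≠ 0}) :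
    ∃ κ : σ → Fin 4, IsBalanced n κ ∧ LinearMap.ker (patternMap n κ v) ≠ ⊥ := by
  have hfib (j : Fin 4) (hj : j ≠ 0) : #{i | ℓ i = j} < n := by
    refine (card_le_natDegree_of_eval_eq_zero (hy j hj) hv.injOn fun i hi => ?_).trans_lt
      (natDegree_lt_of_mem_degreeLT (hy j hj) (labelPoly_mem_degreeLT j y.1.2 y.2.2))
    rw [← (mem_filter.mp hi).2]
    exact congrFun hker i
  obtain ⟨κ, hκ, hκℓ⟩ := exists_isBalanced_restrict hlab hfib
  refine ⟨κ, hκ, (Submodule.ne_bot_iff _).mpr ⟨y, LinearMap.mem_ker.mpr (funext fun i => ?_),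
    fun h0 => hy 1 (by decide) (by simp [h0, labelPoly])⟩⟩
  rcases hκℓ i with h | h
  · rw [patternMap_apply, h]
    exact congrFun hker i
  · simp [patternMap_apply, h, labelPoly, uWeight, wWeight]

theorem patternMap_coincidenceLabel_eq_zero [DecidableEq F] {n : ℕ} {f₁ f₂ f₃ h : F[X]}
    (v : σ → F) {y : F[X]_n × F[X]_n} (h₁ : f₁ - f₂ = h * y.1) (h₃ : f₂ - f₃ = h * y.2) :
    patternMap n (fun i => coincidenceLabel (f₁.eval (v i)) (f₂.eval (v i)) (f₃.eval (v i))) v y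
      = 0 := by
  ext i
  rw [patternMap_apply, Pi.zero_apply]
  have hrow := congrArg (eval (v i)) (labelPoly_mul
    (coincidenceLabel (f₁.eval (v i)) (f₂.eval (v i)) (f₃.eval (v i))) h y.1 y.2)
  rw [← h₁, ← h₃, eval_labelPoly_coincidenceLabel, eval_mul, eq_comm, mul_eq_zero] at hrow
  rcases hrow with h0 | h0
  · -- where `h` vanishes, all three `f`'s agree and the label is `0`
    have e₁ : (f₁ - f₂).eval (v i) = 0 := by rw [h₁, eval_mul, h0, zero_mul]
    have e₃ : (f₂ - f₃).eval (v i) = 0 := by rw [h₃, eval_mul, h0, zero_mul]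
    rw [eval_sub, sub_eq_zero] at e₁ e₃
    simp [coincidenceLabel, e₁, e₃, labelPoly, uWeight, wWeight]
  · exact h0

theorem exists_patternMap_coincidenceLabel_eq_zero [Fintype σ] [DecidableEq F] {k : ℕ}
    {v : σ → F} (hv : Function.Injective v) {f₁ f₂ f₃ : F[X]} (hf₁ : f₁ ∈ F[X]_k)
    (hf₂ : f₂ ∈ F[X]_k) (hf₃ : f₃ ∈ F[X]_k) (h₁₂ : f₁ ≠ f₂) (h₁₃ : f₁ ≠ f₃) (h₂₃ : f₂ ≠ f₃) :
    ∃ n ≤ k, ∃ y : F[X]_n × F[X]_n, (∀ j ≠ 0, labelPoly j (y.1 : F[X]) y.2 ≠ 0) ∧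
      patternMap n (fun i => coincidenceLabel (f₁.eval (v i)) (f₂.eval (v i)) (f₃.eval (v i))) v y
        = 0 ∧
      #{i | f₁.eval (v i) = f₂.eval (v i) ∧ f₂.eval (v i) = f₃.eval (v i)} + n ≤ k := by
  set h := gcd (f₁ - f₂) (f₂ - f₃)
  obtain ⟨u, hu⟩ := gcd_dvd_left (f₁ - f₂) (f₂ - f₃)
  obtain ⟨w, hw⟩ := gcd_dvd_right (f₁ - f₂) (f₂ - f₃)
  have hfac (j : Fin 4) : labelPoly j (f₁ - f₂) (f₂ - f₃) = h * labelPoly j u w := by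
    rw [← labelPoly_mul, ← hu, ← hw]
  have hne (j : Fin 4) (hj : j ≠ 0) : labelPoly j u w ≠ 0 :=
    right_ne_zero_of_mul (hfac j ▸ labelPoly_sub_ne_zero hj h₁₂ h₁₃ h₂₃)
  have hh : h ≠ 0 := left_ne_zero_of_mul (hfac 1 ▸ labelPoly_sub_ne_zero one_ne_zero h₁₂ h₁₃ h₂₃)
  have hdeg (j : Fin 4) (hj : j ≠ 0) : h.natDegree + (labelPoly j u w).natDegree < k := by
    rw [← natDegree_mul hh (hne j hj), ← hfac]
    exact natDegree_lt_of_mem_degreeLT (hfac j ▸ mul_ne_zero hh (hne j hj))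
      (labelPoly_mem_degreeLT j (sub_mem hf₁ hf₂) (sub_mem hf₂ hf₃))
  have hmem (j : Fin 4) (hj : j ≠ 0) : labelPoly j u w ∈ F[X]_(k - h.natDegree) :=
    mem_degreeLT_of_natDegree_lt (by have := hdeg j hj; omega)
  refine ⟨k - h.natDegree, Nat.sub_le _ _,
    (⟨u, by simpa [labelPoly, uWeight, wWeight] using hmem 1 one_ne_zero⟩,
      ⟨w, by simpa [labelPoly, uWeight, wWeight] using hmem 3 (by decide)⟩),
    hne, patternMap_coincidenceLabel_eq_zero v hu hw, ?_⟩
  have := hdeg 1 one_ne_zero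
  have hI := card_le_natDegree_of_eval_eq_zero hh hv.injOn
    (s := {i | f₁.eval (v i) = f₂.eval (v i) ∧ f₂.eval (v i) = f₃.eval (v i)}) fun i hi => by
      obtain ⟨h₁, h₂⟩ := (mem_filter.mp hi).2
      exact dvd_iff_isRoot.mp (dvd_gcd (dvd_iff_isRoot.mpr (by simp [IsRoot, h₁]))
        (dvd_iff_isRoot.mpr (by simp [IsRoot, h₂])))
  omega

theorem exists_isBalanced_of_not_separating [Fintype σ] [DecidableEq F] {k : ℕ} {v : σ → F}
    (hv : Function.Injective v) {f₁ f₂ f₃ : F[X]} (hf₁ : f₁.natDegree < k)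
    (hf₂ : f₂.natDegree < k) (hf₃ : f₃.natDegree < k) (h₁₂ : f₁ ≠ f₂) (h₁₃ : f₁ ≠ f₃)
    (h₂₃ : f₂ ≠ f₃)
    (hbad : (#{i | f₁.eval (v i) ≠ f₂.eval (v i) ∧ f₁.eval (v i) ≠ f₃.eval (v i) ∧
        f₂.eval (v i) ≠ f₃.eval (v i)} : ℤ) ≤
      Fintype.card σ - 2 * k +
        #{i | f₁.eval (v i) = f₂.eval (v i) ∧ f₂.eval (v i) = f₃.eval (v i)}) :
    ∃ n ≤ k, ∃ κ : σ → Fin 4, IsBalanced n κ ∧ LinearMap.ker (patternMap n κ v) ≠ ⊥ := by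
  obtain ⟨n, hnk, y, hy, hker, hI⟩ := exists_patternMap_coincidenceLabel_eq_zero hv
    (mem_degreeLT_of_natDegree_lt hf₁) (mem_degreeLT_of_natDegree_lt hf₂)
    (mem_degreeLT_of_natDegree_lt hf₃) h₁₂ h₁₃ h₂₃
  refine ⟨n, hnk, exists_isBalanced_ker_patternMap_ne_bot hv hy hker ?_⟩
  classical
  set I : Finset σ := {i | f₁.eval (v i) = f₂.eval (v i) ∧ f₂.eval (v i) = f₃.eval (v i)}
  set S : Finset σ := {i | f₁.eval (v i) ≠ f₂.eval (v i) ∧ f₁.eval (v i) ≠ f₃.eval (v i) ∧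
    f₂.eval (v i) ≠ f₃.eval (v i)}
  set ℓ : σ → Fin 4 := fun i => coincidenceLabel (f₁.eval (v i)) (f₂.eval (v i)) (f₃.eval (v i))
  change 2 * n ≤ #{i | ℓ i ≠ 0}
  have hzero : #{i | ℓ i = 0} ≤ #(I ∪ S) := card_le_card fun i hi => by
    simpa [I, S] using coincidenceLabel_eq_zero (mem_filter.mp hi).2
  have hsplit := card_filter_add_card_filter_not (s := univ) fun i => ℓ i = 0
  have hunion := card_union_le I S
  simp only [card_univ, ne_eq] at hsplit ⊢
  omega

/-- Füredi's lemma. -/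
theorem exists_ker_patternMap_eq_bot [Fintype σ] [DecidableEq σ] [Fintype F] {n : ℕ}
    {κ : σ → Fin 4} (hκ : IsBalanced n κ) (hq : 2 * n ≤ Fintype.card F) :
    ∃ v : σ → F, LinearMap.ker (patternMap n κ v) = ⊥ := by
  have hsum := hκ.card_fibers
  have h₁ := hκ.2 1 (by decide)
  have h₂ := hκ.2 2 (by decide)
  have h₃ := hκ.2 3 (by decide)
  set A₁ : Finset σ := {i | κ i = 1}
  set A₃ : Finset σ := {i | κ i = 3}
  obtain ⟨v₀, hv₀⟩ := exists_injOn_of_card_le (F := F) (s := A₁ ∪ A₃)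
    ((card_union_le _ _).trans (by omega))
  obtain ⟨z, hz⟩ := degreeLT.exists_fin_separating_ker_evalOn_prodMap hv₀
    (disjoint_filter.mpr fun i _ h₁ h₃ => by simp [h₁] at h₃) h₁.le h₃.le (by omega) (by omega)
  let e : {i // κ i = 2} ≃ Fin (2 * n - #A₁ - #A₃) :=
    Fintype.equivFinOfCardEq (by rw [Fintype.card_subtype]; omega)
  set v : σ → F := fun i => if h : κ i = 2 then z (e ⟨i, h⟩) else v₀ i
  refine ⟨v, LinearMap.ker_eq_bot'.mpr fun y hy => ?_⟩
  have hrow (i : σ) : (labelPoly (κ i) (y.1 : F[X]) y.2).eval (v i) = 0 := congrFun hy i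
  refine hz y ?_ fun a => ?_
  · simp only [LinearMap.mem_ker, LinearMap.prodMap_apply, Prod.mk_eq_zero, funext_iff,
      degreeLT.evalOn_apply, Pi.zero_apply, Subtype.forall]
    refine ⟨fun i hi => ?_, fun i hi => ?_⟩ <;> replace hi : κ i = _ := (mem_filter.mp hi).2 <;>
      simpa [v, hi, labelPoly, uWeight, wWeight] using hrow i
  · simpa [v, (e.symm a).2, labelPoly, uWeight, wWeight] using hrow (e.symm a)

end Pattern

section Determinant

open Matrix

variable {F σ : Type*} [Field F]

def patternMatrix {R : Type*} [CommRing R] (n : ℕ) (κ : σ → Fin 4) (v : σ → R) :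
    Matrix σ (Fin n ⊕ Fin n) R :=
  Matrix.of fun i => Sum.elim (fun m => uWeight (κ i) * v i ^ (m : ℕ))
    (fun m => wWeight (κ i) * v i ^ (m : ℕ))

noncomputable def pairCoeffEquiv (n : ℕ) : (F[X]_n × F[X]_n) ≃ₗ[F] (Fin n ⊕ Fin n → F) :=
  ((degreeLTEquiv F n).prodCongr (degreeLTEquiv F n)).trans
    (LinearEquiv.sumArrowLequivProdArrow _ _ _ _).symm

theorem patternMap_eq_mulVec (n : ℕ) (κ : σ → Fin 4) (v : σ → F) (y : F[X]_n × F[X]_n) :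
    patternMap n κ v y = patternMatrix n κ v *ᵥ pairCoeffEquiv n y := by
  ext i
  rw [patternMap_apply, labelPoly, eval_add, eval_smul, eval_smul,
    eval_eq_sum_degreeLTEquiv y.1.2, eval_eq_sum_degreeLTEquiv y.2.2]
  simp [patternMatrix, pairCoeffEquiv, mulVec, dotProduct, Fintype.sum_sum_type, mul_sum,
    mul_comm, mul_left_comm, mul_assoc]

theorem det_patternMatrix_submatrix_eq_zero_iff {n : ℕ} {κ : σ → Fin 4}
    (e : Fin n ⊕ Fin n ≃ {i // κ i ≠ 0}) (v : σ → F) :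
    ((patternMatrix n κ v).submatrix (fun a => (e a : σ)) id).det = 0 ↔
      LinearMap.ker (patternMap n κ v) ≠ ⊥ := by
  rw [← exists_mulVec_eq_zero_iff, Submodule.ne_bot_iff]
  -- the rows left out are those labelled `0`, which vanish
  have hrows (c : Fin n ⊕ Fin n → F) :
      (patternMatrix n κ v).submatrix (fun a => (e a : σ)) id *ᵥ c = 0 ↔
        patternMatrix n κ v *ᵥ c = 0 := by
    refine ⟨fun h => funext fun i => ?_, fun h => funext fun a => congrFun h (e a)⟩
    by_cases hi : κ i = 0
    · simp [mulVec, dotProduct, patternMatrix, hi, uWeight, wWeight]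
    · simpa [mulVec] using congrFun h (e.symm ⟨i, hi⟩)
  constructor
  · rintro ⟨c, hc, hMc⟩
    refine ⟨(pairCoeffEquiv n).symm c, ?_, by simpa using hc⟩
    rw [LinearMap.mem_ker, patternMap_eq_mulVec, LinearEquiv.apply_symm_apply, ← hrows, hMc]
  · rintro ⟨y, hy, hy0⟩
    refine ⟨pairCoeffEquiv n y, by simpa using hy0, ?_⟩
    rwa [hrows, ← patternMap_eq_mulVec]

noncomputable def patternDet {n : ℕ} {κ : σ → Fin 4} (e : Fin n ⊕ Fin n ≃ {i // κ i ≠ 0}) :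
    MvPolynomial σ F :=
  ((patternMatrix n κ MvPolynomial.X).submatrix (fun a => (e a : σ)) id).det

theorem eval_patternDet {n : ℕ} {κ : σ → Fin 4} (e : Fin n ⊕ Fin n ≃ {i // κ i ≠ 0})
    (v : σ → F) :
    MvPolynomial.eval v (patternDet e) =
      ((patternMatrix n κ v).submatrix (fun a => (e a : σ)) id).det := by
  rw [patternDet, RingHom.map_det]
  congr
  ext a (m | m) <;> simp [patternMatrix]

theorem totalDegree_patternDet_le {n : ℕ} {κ : σ → Fin 4} (e : Fin n ⊕ Fin n ≃ {i // κ i ≠ 0}) :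
    (patternDet (F := F) e).totalDegree ≤ n * (n - 1) := by
  refine (MvPolynomial.totalDegree_det_le _
    (Sum.elim (fun m : Fin n => (m : ℕ)) (fun m : Fin n => (m : ℕ))) ?_).trans_eq ?_
  · have hC (j : ℕ) : (j : MvPolynomial σ F).totalDegree = 0 := by
      rw [← map_natCast MvPolynomial.C, MvPolynomial.totalDegree_C]
    rintro a (m | m) <;> refine (MvPolynomial.totalDegree_mul _ _).trans ?_ <;>
      simp [hC, MvPolynomial.totalDegree_X_pow]
  · simp only [Fintype.sum_sum_type, Sum.elim_inl, Sum.elim_inr]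
    rw [Fin.sum_univ_eq_sum_range (fun m => m), ← sum_range_id_mul_two, mul_two]

end Determinant

section StronglyPerfectHashing

variable {F : Type*} [Field F] [DecidableEq F]

/-- The `r × q ^ k` matrix with columns `(f (v 0), …, f (v (r - 1)))`, `deg f < k`, is strongly
3-perfect hashing. -/
def IsStronglyPerfectHashing {r : ℕ} (k : ℕ) (v : Fin r → F) : Prop :=
  ∀ f₁ f₂ f₃ : F[X], f₁.natDegree < k → f₂.natDegree < k → f₃.natDegree < k →
    f₁ ≠ f₂ → f₁ ≠ f₃ → f₂ ≠ f₃ →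
    (r : ℤ) - 2 * k +
        ((univ.filter (fun i : Fin r =>
          f₁.eval (v i) = f₂.eval (v i) ∧ f₂.eval (v i) = f₃.eval (v i))).card : ℤ)
      < ((univ.filter (fun i : Fin r =>
          f₁.eval (v i) ≠ f₂.eval (v i) ∧ f₁.eval (v i) ≠ f₃.eval (v i) ∧
          f₂.eval (v i) ≠ f₃.eval (v i))).card : ℤ)

theorem not_injective_or_exists_isBalanced {r k : ℕ} {v : Fin r → F}
    (hv : ¬IsStronglyPerfectHashing k v) : ¬Function.Injective v ∨
      ∃ κ : Fin r → Fin 4, ∃ n ≤ k, IsBalanced n κ ∧ LinearMap.ker (patternMap n κ v) ≠ ⊥ := by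
  simp only [IsStronglyPerfectHashing, not_forall, not_lt] at hv
  obtain ⟨f₁, f₂, f₃, hf₁, hf₂, hf₃, h₁₂, h₁₃, h₂₃, hbad⟩ := hv
  refine or_iff_not_imp_left.mpr fun hinj => ?_
  obtain ⟨n, hnk, κ, hκ, hker⟩ := exists_isBalanced_of_not_separating (not_not.mp hinj) hf₁ hf₂
    hf₃ h₁₂ h₁₃ h₂₃ (by simpa using hbad)
  exact ⟨κ, n, hnk, hκ, hker⟩

end StronglyPerfectHashing

section Counting

variable {F : Type*} [Field F] [Fintype F] [DecidableEq F]

theorem card_ker_patternMap_ne_bot_mul_le {r n : ℕ} {κ : Fin r → Fin 4} (hκ : IsBalanced n κ)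
    (hq : 2 * n ≤ Fintype.card F) :
    #{v : Fin r → F | LinearMap.ker (patternMap n κ v) ≠ ⊥} * Fintype.card F ≤
      n * (n - 1) * Fintype.card F ^ r := by
  let e : Fin n ⊕ Fin n ≃ {i // κ i ≠ 0} :=
    Fintype.equivOfCardEq (by
      rw [Fintype.card_sum, Fintype.card_fin, Fintype.card_subtype, hκ.1, two_mul])
  obtain ⟨v₀, hv₀⟩ := exists_ker_patternMap_eq_bot hκ hq
  have hP : patternDet (F := F) e ≠ 0 := fun h => by
    have := congrArg (MvPolynomial.eval v₀) h
    rw [eval_patternDet, map_zero, det_patternMatrix_submatrix_eq_zero_iff] at this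
    exact this hv₀
  calc _ ≤ #{v | MvPolynomial.eval v (patternDet e) = 0} * Fintype.card F := by
        refine Nat.mul_le_mul_right _ (card_le_card fun v hv => ?_)
        simpa [eval_patternDet, det_patternMatrix_submatrix_eq_zero_iff] using hv
    _ ≤ _ := MvPolynomial.card_zeros_mul_le hP
    _ ≤ _ := by gcongr; exact totalDegree_patternDet_le e

open scoped Classical in
theorem card_exists_isBalanced_mul_le {r k : ℕ} (hq : 2 * k ≤ Fintype.card F) (κ : Fin r → Fin 4) :
    #{v : Fin r → F | ∃ n ≤ k, IsBalanced n κ ∧ LinearMap.ker (patternMap n κ v) ≠ ⊥} *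
      Fintype.card F ≤ k * (k - 1) * Fintype.card F ^ r := by
  by_cases h : ∃ n ≤ k, IsBalanced n κ
  · obtain ⟨n, hnk, hκ⟩ := h
    calc _ ≤ #{v : Fin r → F | LinearMap.ker (patternMap n κ v) ≠ ⊥} * Fintype.card F := by
          refine Nat.mul_le_mul_right _ (card_le_card fun v hv => ?_)
          obtain ⟨n', -, hκ', hker⟩ := (mem_filter.mp hv).2
          obtain rfl : n' = n := by have := hκ.1; have := hκ'.1; omega
          exact mem_filter.mpr ⟨mem_univ _, hker⟩
      _ ≤ n * (n - 1) * Fintype.card F ^ r := card_ker_patternMap_ne_bot_mul_le hκ (by omega)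
      _ ≤ _ := by gcongr
  · rw [filter_false_of_mem fun v _ ⟨n, hnk, hκ, _⟩ => h ⟨n, hnk, hκ⟩, card_empty, zero_mul]
    exact Nat.zero_le _

open scoped Classical in
theorem card_not_injective_mul_le (r : ℕ) :
    #{v : Fin r → F | ¬Function.Injective v} * Fintype.card F ≤ r ^ 2 * Fintype.card F ^ r := by
  set Z : Fin r × Fin r → Finset (Fin r → F) := fun p =>
    {v | MvPolynomial.eval v (MvPolynomial.X p.1 - MvPolynomial.X p.2) = 0}
  have hsub : ({v | ¬Function.Injective v} : Finset (Fin r → F)) ⊆ univ.offDiag.biUnion Z := by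
    intro v hv
    obtain ⟨i, j, hij, hne⟩ := Function.not_injective_iff.mp (mem_filter.mp hv).2
    exact mem_biUnion.mpr ⟨(i, j), by simpa using hne, by simp [Z, hij]⟩
  have hZ (p : Fin r × Fin r) (hp : p ∈ univ.offDiag) :
      #(Z p) * Fintype.card F ≤ Fintype.card F ^ r := by
    have hne : (MvPolynomial.X p.1 - MvPolynomial.X p.2 : MvPolynomial (Fin r) F) ≠ 0 := by
      rw [sub_ne_zero, Ne, MvPolynomial.X_inj]
      exact (mem_offDiag.mp hp).2.2
    have hdeg : (MvPolynomial.X p.1 - MvPolynomial.X p.2 : MvPolynomial (Fin r) F).totalDegree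
        ≤ 1 := (MvPolynomial.totalDegree_sub _ _).trans (by simp [MvPolynomial.totalDegree_X])
    exact (MvPolynomial.card_zeros_mul_le hne).trans (by simpa using Nat.mul_le_mul_right _ hdeg)
  calc _ ≤ (∑ p ∈ univ.offDiag, #(Z p)) * Fintype.card F :=
        Nat.mul_le_mul_right _ ((card_le_card hsub).trans card_biUnion_le)
    _ ≤ ∑ p ∈ univ.offDiag, Fintype.card F ^ r := by rw [sum_mul]; exact sum_le_sum hZ
    _ ≤ r ^ 2 * Fintype.card F ^ r := by
        rw [sum_const, smul_eq_mul, offDiag_card, card_univ, Fintype.card_fin]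
        gcongr
        rw [sq]
        exact Nat.sub_le _ _

open scoped Classical in
theorem card_not_isStronglyPerfectHashing_mul_le {r k : ℕ} (hk : 1 ≤ k)
    (hq : 2 * k ≤ Fintype.card F) :
    #{v : Fin r → F | ¬IsStronglyPerfectHashing k v} * Fintype.card F ≤
      4 ^ r * k ^ 2 * Fintype.card F ^ r := by
  set Z : (Fin r → Fin 4) → Finset (Fin r → F) := fun κ =>
    {v | ∃ n ≤ k, IsBalanced n κ ∧ LinearMap.ker (patternMap n κ v) ≠ ⊥}
  have hsub : ({v | ¬IsStronglyPerfectHashing k v} : Finset (Fin r → F)) ⊆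
      ({v | ¬Function.Injective v} : Finset (Fin r → F)) ∪ univ.biUnion Z := fun v hv => by
    rcases not_injective_or_exists_isBalanced (mem_filter.mp hv).2 with hinj | ⟨κ, hκ⟩
    · exact mem_union_left _ (mem_filter.mpr ⟨mem_univ _, hinj⟩)
    · exact mem_union_right _ (mem_biUnion.mpr ⟨κ, mem_univ _, mem_filter.mpr ⟨mem_univ _, hκ⟩⟩)
  have hr : r ^ 2 ≤ 4 ^ r * k := by
    calc r ^ 2 ≤ (2 ^ r) ^ 2 := by gcongr; exact (Nat.lt_two_pow_self).le
      _ = 4 ^ r * 1 := by rw [← pow_mul, mul_comm, pow_mul]; norm_num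
      _ ≤ 4 ^ r * k := by gcongr
  have hk2 : k * (k - 1) + k = k ^ 2 := by
    obtain ⟨k, rfl⟩ := Nat.exists_eq_add_of_le' hk
    simp only [Nat.add_sub_cancel]
    ring
  calc _ ≤ (#{v : Fin r → F | ¬Function.Injective v} + ∑ κ, #(Z κ)) * Fintype.card F :=
        Nat.mul_le_mul_right _ ((card_le_card hsub).trans
          ((card_union_le _ _).trans (Nat.add_le_add_left card_biUnion_le _)))
    _ = #{v : Fin r → F | ¬Function.Injective v} * Fintype.card F +
          ∑ κ, #(Z κ) * Fintype.card F := by rw [add_mul, sum_mul]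
    _ ≤ r ^ 2 * Fintype.card F ^ r + ∑ _κ : Fin r → Fin 4, k * (k - 1) * Fintype.card F ^ r :=
        add_le_add (card_not_injective_mul_le r)
          (sum_le_sum fun κ _ => card_exists_isBalanced_mul_le hq κ)
    _ = (r ^ 2 + 4 ^ r * (k * (k - 1))) * Fintype.card F ^ r := by
        simp only [sum_const, card_univ, Fintype.card_fun, Fintype.card_fin, smul_eq_mul]
        ring
    _ ≤ 4 ^ r * k ^ 2 * Fintype.card F ^ r := by
        gcongr
        rw [← hk2, mul_add]
        omega

end Counting

/-- For q > 4^r k^2 there exist at least q^r - 4^r k^2 q^{r-1} > 0 vectors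
v ∈ F_q^r for which the evaluation matrix of polynomials of degree < k is
strongly 3-perfect hashing. -/
theorem strongly_perfect_hashing_exists (F : Type*) [Field F] [Fintype F]
    [DecidableEq F] (q r k : ℕ) (hq : Fintype.card F = q)
    (hk : 2 ≤ k) (hrk : k < r) (hqlarge : 4 ^ r * k ^ 2 < q) :
    0 < q ^ r - 4 ^ r * k ^ 2 * q ^ (r - 1) ∧
    q ^ r - 4 ^ r * k ^ 2 * q ^ (r - 1) ≤
      {v : Fin r → F | ∀ f₁ f₂ f₃ : F[X],
        f₁.natDegree < k → f₂.natDegree < k → f₃.natDegree < k →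
        f₁ ≠ f₂ → f₁ ≠ f₃ → f₂ ≠ f₃ →
        (r : ℤ) - 2 * k +
            ((univ.filter (fun i : Fin r =>
              f₁.eval (v i) = f₂.eval (v i) ∧ f₂.eval (v i) = f₃.eval (v i))).card : ℤ)
          < ((univ.filter (fun i : Fin r =>
              f₁.eval (v i) ≠ f₂.eval (v i) ∧ f₁.eval (v i) ≠ f₃.eval (v i) ∧
              f₂.eval (v i) ≠ f₃.eval (v i))).card : ℤ)}.ncard := by
  classical
  subst hq
  have hpow : Fintype.card F ^ r = Fintype.card F ^ (r - 1) * Fintype.card F := by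
    rw [← pow_succ, Nat.sub_add_cancel (by omega)]
  have hbad := card_not_isStronglyPerfectHashing_mul_le (F := F) (r := r) (k := k) (by omega)
    (by nlinarith [Nat.one_le_pow r 4 (by norm_num)])
  rw [hpow, ← mul_assoc] at hbad
  replace hbad := Nat.le_of_mul_le_mul_right hbad Fintype.card_pos
  refine ⟨Nat.sub_pos_of_lt ?_, ?_⟩
  · rw [hpow, mul_comm]
    exact Nat.mul_lt_mul_of_pos_left hqlarge (by positivity)
  · change _ ≤ {v | IsStronglyPerfectHashing k v}.ncard
    rw [Set.ncard_eq_toFinset_card', Set.toFinset_ofPred]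
    have := card_filter_add_card_filter_not (s := univ)
      (IsStronglyPerfectHashing (F := F) (r := r) k)
    rw [card_univ, Fintype.card_fun, Fintype.card_fin] at this
    omega
end

section
/- Let H be an almost linear G_r(3r-4,3)-free r-uniform hypergraph on [s] with edges A_1,...,A_m, and construct the (r+1)-graph G_t(H) on t disjoint 'petals' S_1,...,S_t (copies of [s]) and a 'core' X = {x_1,...,x_m} by taking, for each petal i and each j, the edge Ψ_{S_i}(A_j) ∪ {x_j}, where Ψ_{S_i} is a bijective embedding of [s] into S_i. Then G_t(H) is an almost linear (r+1)-graph with mt edges, and it is G_{r+1}(3r-1, 3)-free. -/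
open Finset

section Aux

variable {s t : ℕ}

/-- The image of a set of vertices of `H` inside petal `i`. -/
private def pim (m : ℕ) {s t : ℕ} (i : Fin t) (X : Finset (Fin s)) :
    Finset ((Fin t × Fin s) ⊕ Fin m) :=
  X.image (fun a => Sum.inl (i, a))

private lemma pim_card (m : ℕ) (i : Fin t) (X : Finset (Fin s)) :
    (pim m i X).card = X.card :=
  card_image_of_injective _ (fun a b h => by simpa using h)

private lemma pim_union (m : ℕ) (i : Fin t) (X Y : Finset (Fin s)) :
    pim m i (X ∪ Y) = pim m i X ∪ pim m i Y :=
  image_union _ _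

private lemma pim_disj (m : ℕ) {i i' : Fin t} (h : i ≠ i') (X Y : Finset (Fin s)) :
    Disjoint (pim m i X) (pim m i' Y) := by
  simp only [pim, disjoint_left, mem_image]
  rintro x ⟨a, _, rfl⟩ ⟨b, _, hx⟩
  simp only [Sum.inl.injEq, Prod.mk.injEq] at hx
  exact h hx.1.symm

private lemma two_bound (m : ℕ) {r : ℕ} (i : Fin t) {X Y : Finset (Fin s)}
    (hX : X.card = r) (hY : Y.card = r) (hXY : (X ∩ Y).card ≤ 2) :
    2 * r - 2 ≤ (pim m i X ∪ pim m i Y).card := by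
  rw [← pim_union, pim_card]
  have h := card_union_add_card_inter X Y
  omega

private lemma mixed_bound (m : ℕ) {r : ℕ} {i i' : Fin t} (h : i ≠ i') {X Y Z : Finset (Fin s)}
    (hX : X.card = r) (hY : Y.card = r) (hZ : Z.card = r) (hXY : (X ∩ Y).card ≤ 2) :
    3 * r - 2 ≤ (pim m i X ∪ pim m i Y ∪ pim m i' Z).card := by
  rw [card_union_of_disjoint (disjoint_union_left.mpr ⟨pim_disj m h _ _, pim_disj m h _ _⟩),
    pim_card, hZ]
  have h2 := two_bound m i hX hY hXY
  omega

private lemma all_disj_bound (m : ℕ) {r : ℕ} {i₁ i₂ i₃ : Fin t} (h12 : i₁ ≠ i₂)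
    (h13 : i₁ ≠ i₃) (h23 : i₂ ≠ i₃) {X Y Z : Finset (Fin s)}
    (hX : X.card = r) (hY : Y.card = r) (hZ : Z.card = r) :
    3 * r ≤ (pim m i₁ X ∪ pim m i₂ Y ∪ pim m i₃ Z).card := by
  rw [card_union_of_disjoint (disjoint_union_left.mpr ⟨pim_disj m h13 _ _, pim_disj m h23 _ _⟩),
    card_union_of_disjoint (pim_disj m h12 _ _), pim_card, pim_card, pim_card, hX, hY, hZ]
  omega

private lemma union_rot {α : Type*} [DecidableEq α] (X Y Z : Finset α) :
    X ∪ Y ∪ Z = Y ∪ Z ∪ X := by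
  rw [union_assoc, union_comm]

private lemma union_decomp {m : ℕ} (A : Fin m → Finset (Fin s))
    (i₁ i₂ i₃ : Fin t) (j₁ j₂ j₃ : Fin m) :
    ((insert (Sum.inr j₁) ((A j₁).image fun a => (Sum.inl (i₁, a) : (Fin t × Fin s) ⊕ Fin m))) ∪
     (insert (Sum.inr j₂) ((A j₂).image fun a => Sum.inl (i₂, a))) ∪
     (insert (Sum.inr j₃) ((A j₃).image fun a => Sum.inl (i₃, a)))).card
    = ({j₁, j₂, j₃} : Finset (Fin m)).card +
      (pim m i₁ (A j₁) ∪ pim m i₂ (A j₂) ∪ pim m i₃ (A j₃)).card := by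
  have hset : ((insert (Sum.inr j₁) ((A j₁).image fun a => (Sum.inl (i₁, a) : (Fin t × Fin s) ⊕ Fin m))) ∪
     (insert (Sum.inr j₂) ((A j₂).image fun a => Sum.inl (i₂, a))) ∪
     (insert (Sum.inr j₃) ((A j₃).image fun a => Sum.inl (i₃, a))))
     = ({j₁, j₂, j₃} : Finset (Fin m)).image Sum.inr ∪
       (pim m i₁ (A j₁) ∪ pim m i₂ (A j₂) ∪ pim m i₃ (A j₃)) := by
    simp only [pim, image_insert, image_singleton, insert_union, union_insert, union_assoc]
    ext x
    simp only [mem_insert, mem_union, mem_singleton]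
    tauto
  rw [hset, card_union_of_disjoint ?_, card_image_of_injective _ Sum.inr_injective]
  rw [disjoint_left]
  rintro x hx hx'
  obtain ⟨j, -, rfl⟩ := mem_image.mp hx
  simp [pim] at hx'

private lemma triple_bound {m : ℕ} {r : ℕ} (hr : 3 ≤ r)
    (A : Fin m → Finset (Fin s))
    (huniform : ∀ j, (A j).card = r)
    (hlinear : ∀ j₁ j₂, j₁ ≠ j₂ → (A j₁ ∩ A j₂).card ≤ 2)
    (hfree : ∀ j₁ j₂ j₃, j₁ ≠ j₂ → j₁ ≠ j₃ → j₂ ≠ j₃ →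
      3 * r - 4 + 1 ≤ (A j₁ ∪ A j₂ ∪ A j₃).card)
    (i₁ i₂ i₃ : Fin t) (j₁ j₂ j₃ : Fin m)
    (h12 : (i₁, j₁) ≠ (i₂, j₂)) (h13 : (i₁, j₁) ≠ (i₃, j₃)) (h23 : (i₂, j₂) ≠ (i₃, j₃)) :
    3 * r ≤ ((insert (Sum.inr j₁) ((A j₁).image fun a => (Sum.inl (i₁, a) : (Fin t × Fin s) ⊕ Fin m))) ∪
     (insert (Sum.inr j₂) ((A j₂).image fun a => Sum.inl (i₂, a))) ∪
     (insert (Sum.inr j₃) ((A j₃).image fun a => Sum.inl (i₃, a)))).card := by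
  rw [union_decomp]
  rcases eq_or_ne j₁ j₂ with hj12 | hj12
  · subst hj12
    rcases eq_or_ne j₁ j₃ with hj13 | hj13
    · -- all cores equal: petals pairwise distinct
      subst hj13
      have hi12 : i₁ ≠ i₂ := fun h => h12 (by rw [h])
      have hi13 : i₁ ≠ i₃ := fun h => h13 (by rw [h])
      have hi23 : i₂ ≠ i₃ := fun h => h23 (by rw [h])
      have hC : 1 ≤ ({j₁, j₁, j₁} : Finset (Fin m)).card := card_pos.mpr ⟨j₁, by simp⟩
      have hS := all_disj_bound m hi12 hi13 hi23 (huniform j₁) (huniform j₁) (huniform j₁)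
      omega
    · -- j₁ = j₂ ≠ j₃
      have hi12 : i₁ ≠ i₂ := fun h => h12 (by rw [h])
      have hC : 2 ≤ ({j₁, j₁, j₃} : Finset (Fin m)).card := by
        refine le_trans (le_of_eq (card_pair hj13).symm) (card_le_card ?_)
        intro x hx; simp at hx ⊢; tauto
      rcases eq_or_ne i₃ i₁ with h | hi31
      · rw [h, union_right_comm]
        have hS := mixed_bound m hi12 (huniform j₁) (huniform j₃) (huniform j₁)
          (hlinear _ _ hj13)
        omega
      · rcases eq_or_ne i₃ i₂ with h | hi32
        · rw [h, union_rot]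
          have hS := mixed_bound m (Ne.symm hi12) (huniform j₁) (huniform j₃) (huniform j₁)
            (hlinear _ _ hj13)
          omega
        · have hS := all_disj_bound m hi12 (Ne.symm hi31) (Ne.symm hi32)
            (huniform j₁) (huniform j₁) (huniform j₃)
          omega
  · rcases eq_or_ne j₁ j₃ with hj13 | hj13
    · -- j₁ = j₃ ≠ j₂
      subst hj13
      have hi13 : i₁ ≠ i₃ := fun h => h13 (by rw [h])
      have hC : 2 ≤ ({j₁, j₂, j₁} : Finset (Fin m)).card := by
        refine le_trans (le_of_eq (card_pair hj12).symm) (card_le_card ?_)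
        intro x hx; simp at hx ⊢; tauto
      rcases eq_or_ne i₂ i₁ with h | hi21
      · rw [h]
        have hS := mixed_bound m hi13 (huniform j₁) (huniform j₂) (huniform j₁)
          (hlinear _ _ hj12)
        omega
      · rcases eq_or_ne i₂ i₃ with h | hi23
        · rw [h, union_rot]
          have hS := mixed_bound m (Ne.symm hi13) (huniform j₂) (huniform j₁) (huniform j₁)
            (hlinear _ _ (Ne.symm hj12))
          omega
        · have hS := all_disj_bound m (Ne.symm hi21) hi13 hi23
            (huniform j₁) (huniform j₂) (huniform j₁)
          omega
    · rcases eq_or_ne j₂ j₃ with hj23 | hj23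
      · -- j₂ = j₃ ≠ j₁
        subst hj23
        have hi23 : i₂ ≠ i₃ := fun h => h23 (by rw [h])
        have hC : 2 ≤ ({j₁, j₂, j₂} : Finset (Fin m)).card := by
          refine le_trans (le_of_eq (card_pair hj12).symm) (card_le_card ?_)
          intro x hx; simp at hx ⊢; tauto
        rcases eq_or_ne i₁ i₂ with h | hi12
        · rw [h]
          have hS := mixed_bound m hi23 (huniform j₁) (huniform j₂) (huniform j₂)
            (hlinear _ _ hj12)
          omega
        · rcases eq_or_ne i₁ i₃ with h | hi13
          · rw [h, union_right_comm]
            have hS := mixed_bound m (Ne.symm hi23) (huniform j₁) (huniform j₂) (huniform j₂)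
              (hlinear _ _ hj12)
            omega
          · have hS := all_disj_bound m hi12 hi13 hi23
              (huniform j₁) (huniform j₂) (huniform j₂)
            omega
      · -- all cores distinct
        have hC : ({j₁, j₂, j₃} : Finset (Fin m)).card = 3 := by
          rw [card_insert_of_notMem (by simp [hj12, hj13]),
            card_insert_of_notMem (by simpa using hj23), card_singleton]
        rcases eq_or_ne i₁ i₂ with h | hi12
        · rw [← h]
          rcases eq_or_ne i₁ i₃ with h' | hi13
          · rw [← h']
            have hS : 3 * r - 3 ≤ (pim m i₁ (A j₁) ∪ pim m i₁ (A j₂) ∪ pim m i₁ (A j₃)).card := by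
              rw [← pim_union, ← pim_union, pim_card]
              have := hfree _ _ _ hj12 hj13 hj23
              omega
            omega
          · have hS := mixed_bound m hi13 (huniform j₁) (huniform j₂) (huniform j₃)
              (hlinear _ _ hj12)
            omega
        · rcases eq_or_ne i₁ i₃ with h' | hi13
          · rw [← h', union_right_comm]
            have hS := mixed_bound m hi12 (huniform j₁) (huniform j₃) (huniform j₂)
              (hlinear _ _ hj13)
            omega
          · rcases eq_or_ne i₂ i₃ with h'' | hi23
            · rw [← h'', union_rot]
              have hS := mixed_bound m (Ne.symm hi12) (huniform j₂) (huniform j₃) (huniform j₁)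
                (hlinear _ _ hj23)
              omega
            · have hS := all_disj_bound m hi12 hi13 hi23
                (huniform j₁) (huniform j₂) (huniform j₃)
              omega

end Aux

/-- Lifting an almost linear G_r(3r-4,3)-free r-graph H (with edges A_1,...,A_m)
to the (r+1)-graph G_t(H) on t petals and a core of size m: the result is an
almost linear (r+1)-graph with mt edges which is G_{r+1}(3r-1,3)-free. -/
theorem lifted_hypergraph_properties (s m t r : ℕ) (hr : 3 ≤ r)
    (A : Fin m → Finset (Fin s)) (hinj : Function.Injective A)
    (huniform : ∀ j, (A j).card = r)
    (hlinear : ∀ j₁ j₂, j₁ ≠ j₂ → (A j₁ ∩ A j₂).card ≤ 2)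
    (hfree : ∀ j₁ j₂ j₃, j₁ ≠ j₂ → j₁ ≠ j₃ → j₂ ≠ j₃ →
      3 * r - 4 + 1 ≤ (A j₁ ∪ A j₂ ∪ A j₃).card) :
    let E : Fin t × Fin m → Finset ((Fin t × Fin s) ⊕ Fin m) :=
      fun p => insert (Sum.inr p.2) ((A p.2).image (fun a => Sum.inl (p.1, a)))
    let GtH : Finset (Finset ((Fin t × Fin s) ⊕ Fin m)) := univ.image E
    GtH.card = m * t ∧
    (∀ F ∈ GtH, F.card = r + 1) ∧
    (∀ F₁ ∈ GtH, ∀ F₂ ∈ GtH, F₁ ≠ F₂ → (F₁ ∩ F₂).card ≤ 2) ∧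
    (∀ F₁ ∈ GtH, ∀ F₂ ∈ GtH, ∀ F₃ ∈ GtH, F₁ ≠ F₂ → F₁ ≠ F₃ → F₂ ≠ F₃ →
      3 * r - 1 + 1 ≤ (F₁ ∪ F₂ ∪ F₃).card) := by
  intro E GtH
  have hAne : ∀ j, (A j).Nonempty := fun j => by
    rw [← card_pos, huniform]; omega
  have hEinj : Function.Injective E := by
    intro p q h
    have hj : p.2 = q.2 := by
      have hm : (Sum.inr p.2 : (Fin t × Fin s) ⊕ Fin m) ∈ E q := h ▸ mem_insert_self _ _
      simpa [E] using hm
    have hi : p.1 = q.1 := by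
      obtain ⟨a, ha⟩ := hAne p.2
      have hm : (Sum.inl (p.1, a) : (Fin t × Fin s) ⊕ Fin m) ∈ E q :=
        h ▸ mem_insert_of_mem (mem_image_of_mem _ ha)
      simp only [E, mem_insert, mem_image, Sum.inl.injEq, Prod.mk.injEq] at hm
      obtain ⟨b, _, hb1, _⟩ := hm.resolve_left (by simp)
      exact hb1.symm
    exact Prod.ext hi hj
  refine ⟨?_, ?_, ?_, ?_⟩
  · rw [card_image_of_injective _ hEinj, card_univ]
    simp [mul_comm]
  · rintro F hF
    obtain ⟨p, _, rfl⟩ := mem_image.mp hF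
    show (insert (Sum.inr p.2) ((A p.2).image fun a => Sum.inl (p.1, a))).card = r + 1
    rw [card_insert_of_notMem (by simp),
      card_image_of_injective _ (fun a b h => by simpa using h), huniform]
  · rintro F₁ hF₁ F₂ hF₂ hne
    obtain ⟨p, _, rfl⟩ := mem_image.mp hF₁
    obtain ⟨q, _, rfl⟩ := mem_image.mp hF₂
    have hpq : p ≠ q := fun h => hne (by rw [h])
    rcases eq_or_ne p.2 q.2 with hj | hj
    · -- same core, different petals
      have hi : p.1 ≠ q.1 := fun h => hpq (Prod.ext h hj)
      have hsub : E p ∩ E q ⊆ {Sum.inr p.2} := by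
        intro x hx
        rw [mem_inter] at hx
        obtain ⟨hx1, hx2⟩ := hx
        simp only [E, mem_insert, mem_image] at hx1 hx2
        rcases hx1 with h1 | ⟨a, ha, rfl⟩
        · simp [h1]
        · rcases hx2 with h2 | ⟨b, hb, h2⟩
          · exact absurd h2 (by simp)
          · simp only [Sum.inl.injEq, Prod.mk.injEq] at h2
            exact absurd h2.1 (Ne.symm hi)
      calc (E p ∩ E q).card ≤ ({Sum.inr p.2} : Finset _).card := card_le_card hsub
        _ ≤ 2 := by simp
    · -- different cores
      have hsub : E p ∩ E q ⊆ pim m p.1 (A p.2) ∩ pim m q.1 (A q.2) := by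
        intro x hx
        rw [mem_inter] at hx ⊢
        obtain ⟨hx1, hx2⟩ := hx
        simp only [E, mem_insert] at hx1 hx2
        rcases hx1 with h1 | h1
        · subst h1
          rcases hx2 with h2 | h2
          · exact absurd (by simpa using h2) hj
          · exact absurd h2 (by simp)
        · rcases hx2 with h2 | h2
          · subst h2
            exact absurd h1 (by simp)
          · exact ⟨h1, h2⟩
      refine le_trans (card_le_card hsub) ?_
      rcases eq_or_ne p.1 q.1 with hi | hi
      · rw [← hi]
        rw [show pim m p.1 (A p.2) ∩ pim m p.1 (A q.2) = pim m p.1 (A p.2 ∩ A q.2) from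
          (image_inter _ _ (fun a b h => by simpa using h)).symm, pim_card]
        exact hlinear _ _ hj
      · rw [disjoint_iff_inter_eq_empty.mp (pim_disj m hi (A p.2) (A q.2))]
        simp
  · rintro F₁ hF₁ F₂ hF₂ F₃ hF₃ h12 h13 h23
    obtain ⟨p₁, _, rfl⟩ := mem_image.mp hF₁
    obtain ⟨p₂, _, rfl⟩ := mem_image.mp hF₂
    obtain ⟨p₃, _, rfl⟩ := mem_image.mp hF₃
    have hp12 : p₁ ≠ p₂ := fun h => h12 (by rw [h])
    have hp13 : p₁ ≠ p₃ := fun h => h13 (by rw [h])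
    have hp23 : p₂ ≠ p₃ := fun h => h23 (by rw [h])
    have key := triple_bound hr A huniform hlinear hfree p₁.1 p₂.1 p₃.1 p₁.2 p₂.2 p₃.2
      (by simpa using hp12) (by simpa using hp13) (by simpa using hp23)
    have h3r : 3 * r - 1 + 1 = 3 * r := by omega
    rw [h3r]
    exact key
end

section
/- Let F_1, F_2, F_3 be three distinct (r+1)-sets, each a disjoint union of a root of size r and a core of size 1, such that: roots of edges in different petals are disjoint, roots are disjoint from all cores, edges in the same petal have distinct cores, roots in the same petal pairwise intersect in at most 2 vertices, and any three roots in the same petal span at least 3r-3 vertices. If F_1, F_2, F_3 are rooted in three distinct petals, then |F_1 ∪ F_2 ∪ F_3| ≥ 3r+1; if rooted in exactly two distinct petals, then |F_1 ∪ F_2 ∪ F_3| ≥ 3r; if rooted in the same petal, then |F_1 ∪ F_2 ∪ F_3| ≥ 3r. -/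
open Finset

private lemma aux2' {α : Type*} [DecidableEq α] {s U : Finset α} {a b : α}
    (hU : U ⊆ s) (ha : a ∈ s) (hb : b ∈ s) (hab : a ≠ b)
    (haU : a ∉ U) (hbU : b ∉ U) : U.card + 2 ≤ s.card := by
  have hsub : insert a (insert b U) ⊆ s := by
    intro x hx
    simp only [mem_insert] at hx
    rcases hx with rfl | rfl | h
    · exact ha
    · exact hb
    · exact hU h
  have hc : (insert a (insert b U)).card = U.card + 2 := by
    rw [card_insert_of_notMem (by simp [hab, haU]), card_insert_of_notMem hbU]
  calc U.card + 2 = (insert a (insert b U)).card := hc.symm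
    _ ≤ s.card := card_le_card hsub

private lemma aux3' {α : Type*} [DecidableEq α] {s U : Finset α} {a b d : α}
    (hU : U ⊆ s) (ha : a ∈ s) (hb : b ∈ s) (hd : d ∈ s)
    (hab : a ≠ b) (had : a ≠ d) (hbd : b ≠ d)
    (haU : a ∉ U) (hbU : b ∉ U) (hdU : d ∉ U) : U.card + 3 ≤ s.card := by
  have hbU' : b ∉ insert d U := by simp [hbd, hbU]
  have haU' : a ∉ insert b (insert d U) := by simp [hab, had, haU]
  have hsub : insert a (insert b (insert d U)) ⊆ s := by
    intro x hx
    simp only [mem_insert] at hx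
    rcases hx with rfl | rfl | rfl | h
    · exact ha
    · exact hb
    · exact hd
    · exact hU h
  have hc : (insert a (insert b (insert d U))).card = U.card + 3 := by
    rw [card_insert_of_notMem haU', card_insert_of_notMem hbU',
      card_insert_of_notMem hdU]
  calc U.card + 3 = (insert a (insert b (insert d U))).card := hc.symm
    _ ≤ s.card := card_le_card hsub

/-- Case analysis for three distinct root-plus-core (r+1)-sets according to the
petals their roots lie in. -/
theorem three_edges_case_analysis {α ι : Type*} [DecidableEq α]
    (r : ℕ) (π : Fin 3 → ι) (R : Fin 3 → Finset α) (c : Fin 3 → α)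
    (Fe : Fin 3 → Finset α)
    (hFe : ∀ i, Fe i = insert (c i) (R i))
    (hcard : ∀ i, (R i).card = r)
    (hcore_not_root : ∀ i j, c j ∉ R i)
    (hdistinct : ∀ i j, i ≠ j → Fe i ≠ Fe j)
    (hroots_disj : ∀ i j, i ≠ j → π i ≠ π j → Disjoint (R i) (R j))
    (hcores_ne : ∀ i j, i ≠ j → π i = π j → c i ≠ c j)
    (hroots_int : ∀ i j, i ≠ j → π i = π j → (R i ∩ R j).card ≤ 2)
    (hroots_free : π 0 = π 1 → π 1 = π 2 →
      3 * r - 3 ≤ (R 0 ∪ R 1 ∪ R 2).card) :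
    ((π 0 ≠ π 1 → π 0 ≠ π 2 → π 1 ≠ π 2 →
        3 * r + 1 ≤ (Fe 0 ∪ Fe 1 ∪ Fe 2).card) ∧
     ((π 0 = π 1 ∨ π 0 = π 2 ∨ π 1 = π 2) → ¬(π 0 = π 1 ∧ π 1 = π 2) →
        3 * r ≤ (Fe 0 ∪ Fe 1 ∪ Fe 2).card) ∧
     (π 0 = π 1 → π 1 = π 2 → 3 * r ≤ (Fe 0 ∪ Fe 1 ∪ Fe 2).card)) := by
  set U : Finset α := R 0 ∪ R 1 ∪ R 2 with hUdef
  set S : Finset α := Fe 0 ∪ Fe 1 ∪ Fe 2 with hSdef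
  have hcU : ∀ i, c i ∉ U := by
    intro i
    simp only [hUdef, mem_union, not_or]
    exact ⟨⟨hcore_not_root 0 i, hcore_not_root 1 i⟩, hcore_not_root 2 i⟩
  have hUS : U ⊆ S := by
    intro x hx
    simp only [hUdef, mem_union] at hx
    simp only [hSdef, mem_union, hFe, mem_insert]
    tauto
  have hcS : ∀ i : Fin 3, c i ∈ S := fun i => by
    fin_cases i <;> simp [hSdef, hFe]
  -- inclusion-exclusion bound for two roots in the same petal
  have hpair : ∀ i j : Fin 3, i ≠ j → π i = π j → 2 * r - 2 ≤ (R i ∪ R j).card := by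
    intro i j hij hπ
    have h1 := Finset.card_union_add_card_inter (R i) (R j)
    have h2 := hroots_int i j hij hπ
    have := hcard i; have := hcard j
    omega
  refine ⟨?_, ?_, ?_⟩
  · -- all petals distinct
    intro h01 h02 h12
    have hd01 := hroots_disj 0 1 (by decide) h01
    have hd02 := hroots_disj 0 2 (by decide) h02
    have hd12 := hroots_disj 1 2 (by decide) h12
    have hUcard : U.card = 3 * r := by
      rw [hUdef, card_union_of_disjoint (disjoint_union_left.mpr ⟨hd02, hd12⟩),
        card_union_of_disjoint hd01, hcard 0, hcard 1, hcard 2]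
      ring
    have hsub : insert (c 0) U ⊆ S := by
      intro x hx
      rcases mem_insert.1 hx with rfl | h
      · exact hcS 0
      · exact hUS h
    have := card_le_card hsub
    rw [card_insert_of_notMem (hcU 0)] at this
    omega
  · -- exactly two petals coincide
    intro hor hnot
    rcases hor with h01 | h02 | h12
    · have h12 : π 1 ≠ π 2 := fun h => hnot ⟨h01, h⟩
      have h02 : π 0 ≠ π 2 := fun h => h12 (h01 ▸ h)
      have hd02 := hroots_disj 0 2 (by decide) h02
      have hd12 := hroots_disj 1 2 (by decide) h12
      have hUcard : (R 0 ∪ R 1).card + r ≤ U.card := by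
        rw [hUdef, card_union_of_disjoint (disjoint_union_left.mpr ⟨hd02, hd12⟩), hcard 2]
      have hp := hpair 0 1 (by decide) h01
      have hcne := hcores_ne 0 1 (by decide) h01
      have := aux2' hUS (hcS 0) (hcS 1) hcne (hcU 0) (hcU 1)
      omega
    · have h12 : π 1 ≠ π 2 := fun h => hnot ⟨h02.trans h.symm, h⟩
      have h01 : π 0 ≠ π 1 := fun h => h12 (h ▸ h02)
      have hd01 := hroots_disj 0 1 (by decide) h01
      have hd12 := hroots_disj 1 2 (by decide) h12
      have hUcard : (R 0 ∪ R 2).card + r ≤ U.card := by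
        have : U = R 0 ∪ R 2 ∪ R 1 := by
          rw [hUdef]; ext x; simp only [mem_union]; tauto
        rw [this, card_union_of_disjoint
          (disjoint_union_left.mpr ⟨hd01, hd12.symm⟩), hcard 1]
      have hp := hpair 0 2 (by decide) h02
      have hcne := hcores_ne 0 2 (by decide) h02
      have := aux2' hUS (hcS 0) (hcS 2) hcne (hcU 0) (hcU 2)
      omega
    · have h01 : π 0 ≠ π 1 := fun h => hnot ⟨h, h12⟩
      have h02 : π 0 ≠ π 2 := fun h => h01 (h.trans h12.symm)
      have hd01 := hroots_disj 0 1 (by decide) h01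
      have hd02 := hroots_disj 0 2 (by decide) h02
      have hUcard : (R 1 ∪ R 2).card + r ≤ U.card := by
        have : U = R 1 ∪ R 2 ∪ R 0 := by
          rw [hUdef]; ext x; simp only [mem_union]; tauto
        rw [this, card_union_of_disjoint
          (disjoint_union_left.mpr ⟨hd01.symm, hd02.symm⟩), hcard 0]
      have hp := hpair 1 2 (by decide) h12
      have hcne := hcores_ne 1 2 (by decide) h12
      have := aux2' hUS (hcS 1) (hcS 2) hcne (hcU 1) (hcU 2)
      omega
  · -- all in the same petal
    intro h01 h12
    have hfree := hroots_free h01 h12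
    have hc01 := hcores_ne 0 1 (by decide) h01
    have hc02 := hcores_ne 0 2 (by decide) (h01.trans h12)
    have hc12 := hcores_ne 1 2 (by decide) h12
    have := aux3' hUS (hcS 0) (hcS 1) (hcS 2) hc01 hc02 hc12
      (hcU 0) (hcU 1) (hcU 2)
    omega
end
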